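/- arXiv:1702.00059 — 15 statements merged into one kernel-verified Lean document; each statement's English description precedes it below -/
import Mathlib

section
/- Let S be an inverse semigroup and ρ an idempotent pure congruence on S. If ρ s t, then there exists u ∈ S with u ≤ s and u ≤ t (natural partial order); that is, ρ is contained in the minimum group congruence σ defined by s σ t iff ∃ u, u ≤ s ∧ u ≤ t. -/
section Aux

variable {S : Type*} [Semigroup S]

/-- Uniqueness of inverses in a semigroup whose idempotents commute. -/
theorem aux_uniq_inv
    (hcomm : ∀ e f : S, e * e = e → f * f = f → e * f = f * e)
    (a x y : S) (hax : a * x * a = a) (hxa : x * a * x = x)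
    (hay : a * y * a = a) (hya : y * a * y = y) : x = y := by
  have hid1 : (x * a) * (x * a) = x * a := by
    calc (x * a) * (x * a) = (x * a * x) * a := by simp [mul_assoc]
    _ = x * a := by rw [hxa]
  have hid2 : (y * a) * (y * a) = y * a := by
    calc (y * a) * (y * a) = (y * a * y) * a := by simp [mul_assoc]
    _ = y * a := by rw [hya]
  have hid3 : (a * x) * (a * x) = a * x := by
    calc (a * x) * (a * x) = (a * x * a) * x := by simp [mul_assoc]
    _ = a * x := by rw [hax]
  have hid4 : (a * y) * (a * y) = a * y := by
    calc (a * y) * (a * y) = (a * y * a) * y := by simp [mul_assoc]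
    _ = a * y := by rw [hay]
  have hx : x = y * a * x := by
    calc x = x * a * x := hxa.symm
    _ = x * (a * y * a) * x := by rw [hay]
    _ = (x * a) * (y * a) * x := by simp [mul_assoc]
    _ = (y * a) * (x * a) * x := by rw [hcomm _ _ hid1 hid2]
    _ = y * (a * (x * a * x)) := by simp [mul_assoc]
    _ = y * (a * x) := by rw [hxa]
    _ = y * a * x := by simp [mul_assoc]
  have hy : y = y * a * x := by
    calc y = y * a * y := hya.symm
    _ = y * (a * x * a) * y := by rw [hax]
    _ = y * ((a * x) * (a * y)) := by simp [mul_assoc]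
    _ = y * ((a * y) * (a * x)) := by rw [hcomm _ _ hid3 hid4]
    _ = (y * a * y) * (a * x) := by simp [mul_assoc]
    _ = y * (a * x) := by rw [hya]
    _ = y * a * x := by simp [mul_assoc]
  rw [hx, ← hy]

end Aux

/-- An idempotent pure congruence `ρ` on an inverse semigroup `S`
is contained in the minimum group congruence `σ`:
if `ρ s t` then there is `u` with `u ≤ s` and `u ≤ t` in the natural partial
order (`u ≤ v` iff `u = u * inv u * v`). -/
theorem idempotent_pure_congruence_le_sigma
    {S : Type*} [Semigroup S] (inv : S → S)
    -- `S` is an inverse semigroup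
    (h1 : ∀ s : S, s * inv s * s = s)
    (h2 : ∀ s : S, inv s * s * inv s = inv s)
    (hcomm : ∀ e f : S, e * e = e → f * f = f → e * f = f * e)
    -- `ρ` is a congruence
    (ρ : S → S → Prop)
    (hρeq : Equivalence ρ)
    (hρmul : ∀ s t u v : S, ρ s t → ρ u v → ρ (s * u) (t * v))
    -- `ρ` is idempotent pure
    (hρpure : ∀ e s : S, ρ e s → e * e = e → s * s = s) :
    ∀ s t : S, ρ s t → ∃ u : S, u = u * inv u * s ∧ u = u * inv u * t := by
  intro s t hst
  set e := inv t * s with he_def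
  -- inv t * t is idempotent
  have hidtt : (inv t * t) * (inv t * t) = inv t * t := by
    calc (inv t * t) * (inv t * t) = inv t * (t * inv t * t) := by simp [mul_assoc]
    _ = inv t * t := by rw [h1]
  -- e is idempotent by idempotent purity
  have hρe : ρ (inv t * t) e := hρeq.symm (hρmul _ _ _ _ (hρeq.refl (inv t)) hst)
  have he : e * e = e := hρpure _ _ hρe hidtt
  have hcom : e * (inv t * t) = (inv t * t) * e := hcomm _ _ he hidtt
  set u := t * e with hu_def
  set w := e * inv t with hw_def
  -- w is an inverse of u
  have huwu : u * w * u = u := by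
    calc u * w * u = t * ((e * e) * (inv t * t)) * e := by
          rw [hu_def, hw_def]; simp [mul_assoc]
    _ = t * (e * (inv t * t)) * e := by rw [he]
    _ = t * ((inv t * t) * e) * e := by rw [hcom]
    _ = (t * inv t * t) * (e * e) := by simp [mul_assoc]
    _ = u := by rw [h1, he]
  have hwuw : w * u * w = w := by
    calc w * u * w = (e * (inv t * t)) * (e * e) * inv t := by
          rw [hu_def, hw_def]; simp [mul_assoc]
    _ = (e * (inv t * t)) * e * inv t := by rw [he]
    _ = ((inv t * t) * e) * e * inv t := by rw [hcom]
    _ = (inv t * t) * (e * e) * inv t := by simp [mul_assoc]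
    _ = (inv t * t) * e * inv t := by rw [he]
    _ = (e * (inv t * t)) * inv t := by rw [hcom]
    _ = e * (inv t * t * inv t) := by simp [mul_assoc]
    _ = w := by rw [h2, hw_def]
  -- hence inv u = w by uniqueness of inverses
  have hinvu : inv u = w :=
    aux_uniq_inv hcomm u (inv u) w (h1 u) (h2 u) huwu hwuw
  have g1 : u * w * s = u := by
    calc u * w * s = t * (e * (e * (inv t * s))) := by rw [hu_def, hw_def]; simp [mul_assoc]
    _ = t * (e * (e * e)) := by rw [← he_def]
    _ = t * e := by rw [he, he]
    _ = u := by rw [hu_def]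
  have g2 : u * w * t = u := by
    calc u * w * t = t * ((e * e) * (inv t * t)) := by rw [hu_def, hw_def]; simp [mul_assoc]
    _ = t * (e * (inv t * t)) := by rw [he]
    _ = t * ((inv t * t) * e) := by rw [hcom]
    _ = (t * inv t * t) * e := by simp [mul_assoc]
    _ = u := by rw [h1, hu_def]
  refine ⟨u, ?_, ?_⟩
  · rw [hinvu]; exact g1.symm
  · rw [hinvu]; exact g2.symm
end

section
/- Let S be an inverse semigroup, ρ an idempotent pure congruence on S, X a set and G a partial action of S on X. Then for every s ∈ S, the union ⋃_{t : ρ t s} G t is again a partial bijection of X (functional and injective); consequently the join of the family {G t : ρ t s} exists in the symmetric inverse monoid on X and equals this union. -/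
/-- If `ρ` is an idempotent pure congruence on an inverse semigroup `S`
and `G` is a partial action of `S` on `X`, then for every `s` the union
`⋃_{t : ρ t s} G t` is again a partial bijection of `X` (functional and injective),
so the join of the family `{G t : ρ t s}` exists in the symmetric inverse monoid on
`X` and equals this union. -/
theorem union_over_congruence_class_is_partial_bijection
    {S X : Type*} [Semigroup S] (inv : S → S)
    -- `S` is an inverse semigroup
    (h1 : ∀ s : S, s * inv s * s = s)
    (h2 : ∀ s : S, inv s * s * inv s = inv s)
    (hcomm : ∀ e f : S, e * e = e → f * f = f → e * f = f * e)
    -- `ρ` is an idempotent pure congruence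
    (ρ : S → S → Prop)
    (hρeq : Equivalence ρ)
    (hρmul : ∀ s t u v : S, ρ s t → ρ u v → ρ (s * u) (t * v))
    (hρpure : ∀ e s : S, ρ e s → e * e = e → s * s = s)
    -- `G` is a partial action of `S` on `X`
    (G : S → Set (X × X))
    (hfun : ∀ (s : S) (x y y' : X), (x, y) ∈ G s → (x, y') ∈ G s → y = y')
    (hinj : ∀ (s : S) (x x' y : X), (x, y) ∈ G s → (x', y) ∈ G s → x = x')
    (hGinv : ∀ s : S, G (inv s) = {p : X × X | (p.2, p.1) ∈ G s})
    (hGcomp : ∀ s t : S,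
      {p : X × X | ∃ y : X, (p.1, y) ∈ G t ∧ (y, p.2) ∈ G s} ⊆ G (s * t)) :
    ∀ s : S,
      (∀ x y y' : X, (∃ t, ρ t s ∧ (x, y) ∈ G t) → (∃ t, ρ t s ∧ (x, y') ∈ G t) →
        y = y') ∧
      (∀ x x' y : X, (∃ t, ρ t s ∧ (x, y) ∈ G t) → (∃ t, ρ t s ∧ (x', y) ∈ G t) →
        x = x') := by
  -- uniqueness of inverses in an inverse semigroup
  have uniq : ∀ a x y : S, a * x * a = a → x * a * x = x → a * y * a = a → y * a * y = y →
      x = y := by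
    intro a x y hax hxa hay hya
    have hex : (x * a) * (x * a) = x * a := by
      calc (x * a) * (x * a) = x * a * x * a := by rw [← mul_assoc]
        _ = x * a := by rw [hxa]
    have hey : (y * a) * (y * a) = y * a := by
      calc (y * a) * (y * a) = y * a * y * a := by rw [← mul_assoc]
        _ = y * a := by rw [hya]
    have hex' : (a * x) * (a * x) = a * x := by
      calc (a * x) * (a * x) = a * (x * a * x) := by simp only [mul_assoc]
        _ = a * x := by rw [hxa]
    have hey' : (a * y) * (a * y) = a * y := by
      calc (a * y) * (a * y) = a * (y * a * y) := by simp only [mul_assoc]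
        _ = a * y := by rw [hya]
    have comm1 : (x * a) * (y * a) = (y * a) * (x * a) := hcomm _ _ hex hey
    have comm2 : (a * x) * (a * y) = (a * y) * (a * x) := hcomm _ _ hex' hey'
    have hx' : x = y * a * x := by
      calc x = x * a * x := hxa.symm
        _ = x * (a * y * a) * x := by rw [hay]
        _ = ((x * a) * (y * a)) * x := by simp only [mul_assoc]
        _ = ((y * a) * (x * a)) * x := by rw [comm1]
        _ = y * (a * x * a) * x := by simp only [mul_assoc]
        _ = y * a * x := by rw [hax]
    have hy' : y = y * a * x := by
      calc y = y * a * y := hya.symm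
        _ = y * (a * x * a) * y := by rw [hax]
        _ = y * ((a * x) * (a * y)) := by simp only [mul_assoc]
        _ = y * ((a * y) * (a * x)) := by rw [comm2]
        _ = (y * a * y) * (a * x) := by simp only [mul_assoc]
        _ = y * (a * x) := by rw [hya]
        _ = y * a * x := by rw [← mul_assoc]
    exact hx'.trans hy'.symm
  have idem_inv : ∀ u : S, u * u = u → inv u = u := by
    intro u hu
    exact uniq u (inv u) u (h1 u) (h2 u) (by rw [hu, hu]) (by rw [hu, hu])
  intro s
  constructor
  · rintro x y y' ⟨t, hts, hxy⟩ ⟨t', ht's, hxy'⟩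
    set u := t' * inv t with hu_def
    have hρu : ρ (t * inv t) u :=
      hρeq.symm (hρmul t' t (inv t) (inv t) (hρeq.trans ht's (hρeq.symm hts)) (hρeq.refl _))
    have hidem : (t * inv t) * (t * inv t) = t * inv t := by
      rw [← mul_assoc, h1]
    have hu : u * u = u := hρpure _ _ hρu hidem
    have huinv : inv u = u := idem_inv u hu
    have hyx : (y, x) ∈ G (inv t) := by rw [hGinv]; exact hxy
    have hyy' : (y, y') ∈ G u := hGcomp t' (inv t) ⟨x, hyx, hxy'⟩
    have hy'y : (y', y) ∈ G u := by
      have := hGinv u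
      rw [huinv] at this
      rw [this]; exact hyy'
    have hyy : (y, y) ∈ G u := by
      have := hGcomp u u (show ((y,y):X×X) ∈ _ from ⟨y', hyy', hy'y⟩)
      rwa [hu] at this
    exact (hfun u y y' y hyy' hyy).symm
  · rintro x x' y ⟨t, hts, hxy⟩ ⟨t', ht's, hx'y⟩
    set u := inv t * t' with hu_def
    have hρu : ρ (inv t * t) u :=
      hρeq.symm (hρmul (inv t) (inv t) t' t (hρeq.refl _) (hρeq.trans ht's (hρeq.symm hts)))
    have hidem : (inv t * t) * (inv t * t) = inv t * t := by
      rw [← mul_assoc, h2]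
    have hu : u * u = u := hρpure _ _ hρu hidem
    have huinv : inv u = u := idem_inv u hu
    have hyx : (y, x) ∈ G (inv t) := by rw [hGinv]; exact hxy
    have hx'x : (x', x) ∈ G u := hGcomp (inv t) t' ⟨y, hx'y, hyx⟩
    have hxx' : (x, x') ∈ G u := by
      have := hGinv u
      rw [huinv] at this
      rw [this]; exact hx'x
    have hx'x' : (x', x') ∈ G u := by
      have := hGcomp u u (show ((x',x'):X×X) ∈ _ from ⟨x, hx'x, hxx'⟩)
      rwa [hu] at this
    exact hinj u x x' x' hxx' hx'x'
end

section
/- Let S be an inverse semigroup, ρ an idempotent pure congruence on S, X a set and G a partial action of S on X. Define G̃ : S → Set (X × X) by G̃ s = ⋃_{t : ρ t s} G t. Then: (1) ρ s s' implies G̃ s = G̃ s'; (2) G̃ (inv s) = (G̃ s)⁻¹ for all s; (3) (G̃ s) ∘ (G̃ t) ⊆ G̃ (s * t) for all s, t. Hence G̃ induces a partial action of the quotient S/ρ on X. -/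
section
variable {S : Type*} [Semigroup S]

/-- Uniqueness of inverses modulo a congruence whose idempotents (mod ρ) commute. -/
lemma rho_inv_unique (ρ : S → S → Prop)
    (hρeq : Equivalence ρ)
    (hρmul : ∀ s t u v : S, ρ s t → ρ u v → ρ (s * u) (t * v))
    (hcommρ : ∀ a b : S, ρ (a*a) a → ρ (b*b) b → ρ (a*b) (b*a))
    {q a b : S}
    (ha1 : ρ (q*a*q) q) (ha2 : ρ (a*q*a) a)
    (hb1 : ρ (q*b*q) q) (hb2 : ρ (b*q*b) b) :
    ρ a b := by
  have rfl' : ∀ x : S, ρ x x := hρeq.refl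
  -- idempotents mod ρ
  have haq : ρ ((a*q)*(a*q)) (a*q) := by
    have e : (a*q)*(a*q) = (a*q*a)*q := by simp [mul_assoc]
    rw [e]; exact hρmul _ _ _ _ ha2 (rfl' q)
  have hbq : ρ ((b*q)*(b*q)) (b*q) := by
    have e : (b*q)*(b*q) = (b*q*b)*q := by simp [mul_assoc]
    rw [e]; exact hρmul _ _ _ _ hb2 (rfl' q)
  have hqa : ρ ((q*a)*(q*a)) (q*a) := by
    have e : (q*a)*(q*a) = q*(a*q*a) := by simp [mul_assoc]
    rw [e]; exact hρmul _ _ _ _ (rfl' q) ha2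
  have hqb : ρ ((q*b)*(q*b)) (q*b) := by
    have e : (q*b)*(q*b) = q*(b*q*b) := by simp [mul_assoc]
    rw [e]; exact hρmul _ _ _ _ (rfl' q) hb2
  -- ρ a (b*q*a)
  have step1 : ρ a ((a*(q*b*q))*a) :=
    hρeq.trans (hρeq.symm ha2)
      (hρmul _ _ _ _ (hρmul _ _ _ _ (rfl' a) (hρeq.symm hb1)) (rfl' a))
  have e1 : (a*(q*b*q))*a = ((a*q)*(b*q))*a := by simp [mul_assoc]
  have step2 : ρ (((a*q)*(b*q))*a) (((b*q)*(a*q))*a) :=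
    hρmul _ _ _ _ (hcommρ _ _ haq hbq) (rfl' a)
  have e2 : ((b*q)*(a*q))*a = (b*q)*(a*q*a) := by simp [mul_assoc]
  have step3 : ρ ((b*q)*(a*q*a)) (b*q*a) := hρmul _ _ _ _ (rfl' (b*q)) ha2
  have hA : ρ a (b*q*a) := by
    refine hρeq.trans step1 ?_
    rw [e1]
    exact hρeq.trans step2 (by rw [e2]; exact step3)
  -- ρ b (b*q*a)
  have step1' : ρ b ((b*(q*a*q))*b) :=
    hρeq.trans (hρeq.symm hb2)
      (hρmul _ _ _ _ (hρmul _ _ _ _ (rfl' b) (hρeq.symm ha1)) (rfl' b))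
  have e1' : (b*(q*a*q))*b = b*((q*a)*(q*b)) := by simp [mul_assoc]
  have step2' : ρ (b*((q*a)*(q*b))) (b*((q*b)*(q*a))) :=
    hρmul _ _ _ _ (rfl' b) (hcommρ _ _ hqa hqb)
  have e2' : b*((q*b)*(q*a)) = (b*q*b)*(q*a) := by simp [mul_assoc]
  have step3' : ρ ((b*q*b)*(q*a)) (b*(q*a)) := hρmul _ _ _ _ hb2 (rfl' (q*a))
  have e3' : b*(q*a) = b*q*a := by simp [mul_assoc]
  have hB : ρ b (b*q*a) := by
    refine hρeq.trans step1' ?_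
    rw [e1']
    refine hρeq.trans step2' ?_
    rw [e2']
    exact hρeq.trans step3' (by rw [e3']; exact rfl' _)
  exact hρeq.trans hA (hρeq.symm hB)

/-- Lallement's lemma: idempotents mod ρ lift to idempotents. -/
lemma rho_lallement (inv : S → S)
    (h1 : ∀ s : S, s * inv s * s = s)
    (h2 : ∀ s : S, inv s * s * inv s = inv s)
    (ρ : S → S → Prop)
    (hρeq : Equivalence ρ)
    (hρmul : ∀ s t u v : S, ρ s t → ρ u v → ρ (s * u) (t * v))
    {a : S} (h : ρ (a*a) a) :
    ∃ e : S, e*e = e ∧ ρ e a := by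
  set x := inv (a*a) with hx
  refine ⟨a*x*a, ?_, ?_⟩
  · have e : (a*x*a)*(a*x*a) = a*(x*(a*a)*x)*a := by simp [mul_assoc]
    rw [e, hx, h2 (a*a)]
  · have ha : ρ a (a*a) := hρeq.symm h
    have : ρ (a*x*a) ((a*a)*x*(a*a)) :=
      hρmul _ _ _ _ (hρmul _ _ _ _ ha (hρeq.refl x)) ha
    rw [hx, h1 (a*a)] at this
    exact hρeq.trans this h

/-- Idempotents mod ρ commute mod ρ. -/
lemma rho_idem_comm (inv : S → S)
    (h1 : ∀ s : S, s * inv s * s = s)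
    (h2 : ∀ s : S, inv s * s * inv s = inv s)
    (hcomm : ∀ e f : S, e * e = e → f * f = f → e * f = f * e)
    (ρ : S → S → Prop)
    (hρeq : Equivalence ρ)
    (hρmul : ∀ s t u v : S, ρ s t → ρ u v → ρ (s * u) (t * v))
    {a b : S} (ha : ρ (a*a) a) (hb : ρ (b*b) b) :
    ρ (a*b) (b*a) := by
  obtain ⟨e, he, hea⟩ := rho_lallement inv h1 h2 ρ hρeq hρmul ha
  obtain ⟨f, hf, hfb⟩ := rho_lallement inv h1 h2 ρ hρeq hρmul hb
  have k1 : ρ (a*b) (e*f) := hρmul _ _ _ _ (hρeq.symm hea) (hρeq.symm hfb)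
  have k2 : ρ (f*e) (b*a) := hρmul _ _ _ _ hfb hea
  rw [hcomm e f he hf] at k1
  exact hρeq.trans k1 k2

/-- `inv` is compatible with the congruence. -/
lemma rho_inv_compat (inv : S → S)
    (h1 : ∀ s : S, s * inv s * s = s)
    (h2 : ∀ s : S, inv s * s * inv s = inv s)
    (hcomm : ∀ e f : S, e * e = e → f * f = f → e * f = f * e)
    (ρ : S → S → Prop)
    (hρeq : Equivalence ρ)
    (hρmul : ∀ s t u v : S, ρ s t → ρ u v → ρ (s * u) (t * v))
    {s t : S} (hst : ρ s t) :
    ρ (inv s) (inv t) := by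
  refine rho_inv_unique ρ hρeq hρmul
    (fun a b => rho_idem_comm inv h1 h2 hcomm ρ hρeq hρmul)
    (q := s) (a := inv s) (b := inv t) ?_ ?_ ?_ ?_
  · rw [h1 s]; exact hρeq.refl s
  · rw [h2 s]; exact hρeq.refl (inv s)
  · have : ρ (s * inv t * s) (t * inv t * t) :=
      hρmul _ _ _ _ (hρmul _ _ _ _ hst (hρeq.refl (inv t))) hst
    rw [h1 t] at this
    exact hρeq.trans this (hρeq.symm hst)
  · have : ρ (inv t * s * inv t) (inv t * t * inv t) :=
      hρmul _ _ _ _ (hρmul _ _ _ _ (hρeq.refl (inv t)) hst) (hρeq.refl (inv t))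
    rw [h2 t] at this
    exact this

lemma inv_inv_eq (inv : S → S)
    (h1 : ∀ s : S, s * inv s * s = s)
    (h2 : ∀ s : S, inv s * s * inv s = inv s)
    (hcomm : ∀ e f : S, e * e = e → f * f = f → e * f = f * e)
    (s : S) : inv (inv s) = s := by
  refine (rho_inv_unique (fun x y => x = y) eq_equivalence
    (fun a b c d h h' => by rw [h, h'])
    (fun a b ha hb => hcomm a b ha hb)
    (q := inv s) (a := s) (b := inv (inv s)) ?_ ?_ ?_ ?_).symm
  · exact h2 s
  · exact h1 s
  · exact h1 (inv s)
  · exact h2 (inv s)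

end


/-- For an idempotent pure congruence `ρ` on an inverse semigroup `S`
and a partial action `G` of `S` on `X`, the family `G̃ s = ⋃_{t : ρ t s} G t`
satisfies: (1) `ρ s s'` implies `G̃ s = G̃ s'`; (2) `G̃ (inv s) = (G̃ s)⁻¹`;
(3) `(G̃ s) ∘ (G̃ t) ⊆ G̃ (s * t)`. Hence `G̃` induces a partial action of `S/ρ`
on `X`. -/
theorem induced_family_is_partial_action_of_quotient
    {S X : Type*} [Semigroup S] (inv : S → S)
    -- `S` is an inverse semigroup
    (h1 : ∀ s : S, s * inv s * s = s)
    (h2 : ∀ s : S, inv s * s * inv s = inv s)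
    (hcomm : ∀ e f : S, e * e = e → f * f = f → e * f = f * e)
    -- `ρ` is an idempotent pure congruence
    (ρ : S → S → Prop)
    (hρeq : Equivalence ρ)
    (hρmul : ∀ s t u v : S, ρ s t → ρ u v → ρ (s * u) (t * v))
    (hρpure : ∀ e s : S, ρ e s → e * e = e → s * s = s)
    -- `G` is a partial action of `S` on `X`
    (G : S → Set (X × X))
    (hfun : ∀ (s : S) (x y y' : X), (x, y) ∈ G s → (x, y') ∈ G s → y = y')
    (hinj : ∀ (s : S) (x x' y : X), (x, y) ∈ G s → (x', y) ∈ G s → x = x')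
    (hGinv : ∀ s : S, G (inv s) = {p : X × X | (p.2, p.1) ∈ G s})
    (hGcomp : ∀ s t : S,
      {p : X × X | ∃ y : X, (p.1, y) ∈ G t ∧ (y, p.2) ∈ G s} ⊆ G (s * t))
    -- the family `G̃`
    (Gt : S → Set (X × X))
    (hGt : ∀ s : S, Gt s = {p : X × X | ∃ t : S, ρ t s ∧ p ∈ G t}) :
    (∀ s s' : S, ρ s s' → Gt s = Gt s') ∧
    (∀ s : S, Gt (inv s) = {p : X × X | (p.2, p.1) ∈ Gt s}) ∧
    (∀ s t : S,
      {p : X × X | ∃ y : X, (p.1, y) ∈ Gt t ∧ (y, p.2) ∈ Gt s} ⊆ Gt (s * t)) := by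
  refine ⟨?_, ?_, ?_⟩
  · intro s s' hss'
    rw [hGt s, hGt s']
    ext p
    constructor
    · rintro ⟨t, ht, hp⟩; exact ⟨t, hρeq.trans ht hss', hp⟩
    · rintro ⟨t, ht, hp⟩; exact ⟨t, hρeq.trans ht (hρeq.symm hss'), hp⟩
  · intro s
    rw [hGt (inv s), hGt s]
    ext p
    constructor
    · rintro ⟨t, ht, hp⟩
      refine ⟨inv t, ?_, ?_⟩
      · have := rho_inv_compat inv h1 h2 hcomm ρ hρeq hρmul ht
        rwa [inv_inv_eq inv h1 h2 hcomm s] at this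
      · rw [hGinv t]
        exact hp
    · rintro ⟨t, ht, hp⟩
      refine ⟨inv t, rho_inv_compat inv h1 h2 hcomm ρ hρeq hρmul ht, ?_⟩
      rw [hGinv t]
      exact hp
  · intro s t p hp
    obtain ⟨y, hy1, hy2⟩ := hp
    rw [hGt t] at hy1
    rw [hGt s] at hy2
    obtain ⟨u, hu, hpu⟩ := hy1
    obtain ⟨v, hv, hpv⟩ := hy2
    rw [hGt (s*t)]
    exact ⟨v * u, hρmul _ _ _ _ hv hu, hGcomp v u ⟨y, hpu, hpv⟩⟩
end

section
/- Let S be an inverse semigroup, ρ an idempotent pure congruence on S, E a meet semilattice, and G a partial action of S on the underlying set of E such that for each s ∈ S, dom (G s) and ran (G s) are order ideals of E (downward closed) and G s is order-preserving ((x,y) ∈ G s, (x',y') ∈ G s and x ≤ x' imply y ≤ y'). Then for every s ∈ S, the union G̃ s = ⋃_{t : ρ t s} G t also has order ideals of E as its domain and range, and both G̃ s and its converse (G̃ s)⁻¹ are order-preserving; i.e. G̃ s is an isomorphism between ideals of E. -/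
/-- If `ρ` is an idempotent pure congruence on an inverse semigroup `S`
and `G` is a partial action of `S` on a meet semilattice `E` by isomorphisms between
ideals (domains and ranges are order ideals and each `G s` is order-preserving),
then each union `G̃ s = ⋃_{t : ρ t s} G t` also has order ideals as its domain and
range, and both `G̃ s` and its converse are order-preserving. -/
theorem induced_partial_action_is_by_isomorphisms_of_ideals
    {S : Type*} {E : Type*} [Semigroup S] [SemilatticeInf E] (inv : S → S)
    -- `S` is an inverse semigroup
    (h1 : ∀ s : S, s * inv s * s = s)
    (h2 : ∀ s : S, inv s * s * inv s = inv s)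
    (hcomm : ∀ e f : S, e * e = e → f * f = f → e * f = f * e)
    -- `ρ` is an idempotent pure congruence
    (ρ : S → S → Prop)
    (hρeq : Equivalence ρ)
    (hρmul : ∀ s t u v : S, ρ s t → ρ u v → ρ (s * u) (t * v))
    (hρpure : ∀ e s : S, ρ e s → e * e = e → s * s = s)
    -- `G` is a partial action of `S` on (the underlying set of) `E`
    (G : S → Set (E × E))
    (hfun : ∀ (s : S) (x y y' : E), (x, y) ∈ G s → (x, y') ∈ G s → y = y')
    (hinj : ∀ (s : S) (x x' y : E), (x, y) ∈ G s → (x', y) ∈ G s → x = x')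
    (hGinv : ∀ s : S, G (inv s) = {p : E × E | (p.2, p.1) ∈ G s})
    (hGcomp : ∀ s t : S,
      {p : E × E | ∃ y : E, (p.1, y) ∈ G t ∧ (y, p.2) ∈ G s} ⊆ G (s * t))
    -- for each `s`, `dom (G s)` and `ran (G s)` are order ideals of `E`
    (hdomIdeal : ∀ (s : S) (x : E), (∃ y, (x, y) ∈ G s) → ∀ z : E, z ≤ x →
      ∃ y, (z, y) ∈ G s)
    (hranIdeal : ∀ (s : S) (y : E), (∃ x, (x, y) ∈ G s) → ∀ z : E, z ≤ y →
      ∃ x, (x, z) ∈ G s)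
    -- each `G s` is order-preserving
    (hmono : ∀ (s : S) (x y x' y' : E), (x, y) ∈ G s → (x', y') ∈ G s →
      x ≤ x' → y ≤ y')
    -- the family `G̃`
    (Gt : S → Set (E × E))
    (hGt : ∀ s : S, Gt s = {p : E × E | ∃ t : S, ρ t s ∧ p ∈ G t}) :
    ∀ s : S,
      (∀ x : E, (∃ y, (x, y) ∈ Gt s) → ∀ z : E, z ≤ x → ∃ y, (z, y) ∈ Gt s) ∧
      (∀ y : E, (∃ x, (x, y) ∈ Gt s) → ∀ z : E, z ≤ y → ∃ x, (x, z) ∈ Gt s) ∧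
      (∀ x y x' y' : E, (x, y) ∈ Gt s → (x', y') ∈ Gt s → x ≤ x' → y ≤ y') ∧
      (∀ x y x' y' : E, (x, y) ∈ Gt s → (x', y') ∈ Gt s → y ≤ y' → x ≤ x') := by
  classical
  -- uniqueness of inverses in an inverse semigroup
  have uniq : ∀ s a b : S, s * a * s = s → a * s * a = a → s * b * s = s → b * s * b = b →
      a = b := by
    intro s a b hsas hasa hsbs hbsb
    have isa : (s * a) * (s * a) = s * a := by rw [← mul_assoc, hsas]
    have isb : (s * b) * (s * b) = s * b := by rw [← mul_assoc, hsbs]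
    have ias : (a * s) * (a * s) = a * s := by
      rw [mul_assoc a s (a * s), ← mul_assoc s a s, hsas]
    have ibs : (b * s) * (b * s) = b * s := by
      rw [mul_assoc b s (b * s), ← mul_assoc s b s, hsbs]
    have h3 : a * (s * b) = a := by
      calc a * (s * b) = (a * s * a) * (s * b) := by rw [hasa]
        _ = a * ((s * a) * (s * b)) := by simp only [mul_assoc]
        _ = a * ((s * b) * (s * a)) := by rw [hcomm (s * a) (s * b) isa isb]
        _ = (a * (s * b * s)) * a := by simp only [mul_assoc]
        _ = a * s * a := by rw [hsbs]
        _ = a := hasa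
    have h4 : (a * s) * b = b := by
      calc (a * s) * b = (a * s) * (b * s * b) := by rw [hbsb]
        _ = ((a * s) * (b * s)) * b := by simp only [mul_assoc]
        _ = ((b * s) * (a * s)) * b := by rw [hcomm (a * s) (b * s) ias ibs]
        _ = (b * (s * a * s)) * b := by simp only [mul_assoc]
        _ = b * s * b := by rw [hsas]
        _ = b := hbsb
    exact h3.symm.trans ((mul_assoc a s b).symm.trans h4)
  -- an idempotent is its own inverse
  have invIdem : ∀ g : S, g * g = g → inv g = g := by
    intro g hg
    exact uniq g (inv g) g (h1 g) (h2 g) (by rw [hg, hg]) (by rw [hg, hg])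
  -- G of an idempotent is contained in the diagonal
  have diag : ∀ g : S, g * g = g → ∀ y w : E, (y, w) ∈ G g → y = w := by
    intro g hg y w hw
    have hsym : (w, y) ∈ G g := by
      have h := hGinv g
      rw [invIdem g hg] at h
      rw [h]; exact hw
    have hyy : (y, y) ∈ G (g * g) := hGcomp g g ⟨w, hw, hsym⟩
    rw [hg] at hyy
    exact (hfun g y w y hw hyy).symm
  -- key functionality across ρ-related elements
  have keyF : ∀ t t' : S, ρ t t' → ∀ x y w : E, (x, y) ∈ G t → (x, w) ∈ G t' → y = w := by
    intro t t' htt' x y w hxy hxw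
    have hyx : (y, x) ∈ G (inv t) := by rw [hGinv t]; exact hxy
    have hyw : (y, w) ∈ G (t' * inv t) := hGcomp t' (inv t) ⟨x, hyx, hxw⟩
    have hidem : (t' * inv t) * (t' * inv t) = t' * inv t := by
      have hrel : ρ (t * inv t) (t' * inv t) := hρmul t t' (inv t) (inv t) htt' (hρeq.refl _)
      have he : (t * inv t) * (t * inv t) = t * inv t := by
        rw [mul_assoc t (inv t) (t * inv t), ← mul_assoc (inv t) t (inv t), h2]
      exact hρpure _ _ hrel he
    exact diag _ hidem y w hyw
  -- key injectivity across ρ-related elements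
  have keyI : ∀ t t' : S, ρ t t' → ∀ x u y : E, (x, y) ∈ G t → (u, y) ∈ G t' → x = u := by
    intro t t' htt' x u y hxy huy
    have hyu : (y, u) ∈ G (inv t') := by rw [hGinv t']; exact huy
    have hxu : (x, u) ∈ G (inv t' * t) := hGcomp (inv t') t ⟨y, hxy, hyu⟩
    have hidem : (inv t' * t) * (inv t' * t) = inv t' * t := by
      have hrel : ρ (inv t' * t') (inv t' * t) :=
        hρmul (inv t') (inv t') t' t (hρeq.refl _) (hρeq.symm htt')
      have he : (inv t' * t') * (inv t' * t') = inv t' * t' := by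
        rw [mul_assoc (inv t') t' (inv t' * t'), ← mul_assoc t' (inv t') t', h1]
      exact hρpure _ _ hrel he
    exact diag _ hidem x u hxu
  intro s
  refine ⟨?_, ?_, ?_, ?_⟩
  · intro x hx z hz
    rw [hGt] at hx ⊢
    obtain ⟨y, t, hts, hxy⟩ := hx
    obtain ⟨y', hy'⟩ := hdomIdeal t x ⟨y, hxy⟩ z hz
    exact ⟨y', t, hts, hy'⟩
  · intro y hy z hz
    rw [hGt] at hy ⊢
    obtain ⟨x, t, hts, hxy⟩ := hy
    obtain ⟨x', hx'⟩ := hranIdeal t y ⟨x, hxy⟩ z hz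
    exact ⟨x', t, hts, hx'⟩
  · intro x y x' y' hxy hx'y' hxx'
    rw [hGt] at hxy hx'y'
    obtain ⟨t, hts, hxy⟩ := hxy
    obtain ⟨t', ht's, hx'y'⟩ := hx'y'
    obtain ⟨w, hxw⟩ := hdomIdeal t' x' ⟨y', hx'y'⟩ x hxx'
    have hyw : y = w := keyF t t' (hρeq.trans hts (hρeq.symm ht's)) x y w hxy hxw
    rw [hyw]
    exact hmono t' x w x' y' hxw hx'y' hxx'
  · intro x y x' y' hxy hx'y' hyy'
    rw [hGt] at hxy hx'y'
    obtain ⟨t, hts, hxy⟩ := hxy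
    obtain ⟨t', ht's, hx'y'⟩ := hx'y'
    obtain ⟨u, huy⟩ := hranIdeal t' y' ⟨x', hx'y'⟩ y hyy'
    have hxu : x = u := keyI t t' (hρeq.trans hts (hρeq.symm ht's)) x u y hxy huy
    rw [hxu]
    have h5 : (y, u) ∈ G (inv t') := by rw [hGinv t']; exact huy
    have h6 : (y', x') ∈ G (inv t') := by rw [hGinv t']; exact hx'y'
    exact hmono (inv t') y u y' x' h5 h6 hyy'
end

section
/- Let (D, θ) be a partial action of an inverse semigroup S on a meet semilattice E by isomorphisms between ideals, and let E ⋊ S = {(e,s) ∈ E × S | e ∈ D (inv s)} with product (e,s)·(f,t) = (θ s (θ (inv s) e ⊓ f), s * t). Then: (1) the product is well defined, i.e. for (e,s),(f,t) ∈ E ⋊ S one has θ (inv s) e ⊓ f ∈ D s and θ s (θ (inv s) e ⊓ f) ∈ D (inv (s * t)); (2) the product is associative on E ⋊ S; (3) every (e,s) ∈ E ⋊ S has (θ (inv s) e, inv s) ∈ E ⋊ S as an inverse: (e,s)·(θ (inv s) e, inv s)·(e,s) = (e,s) and (θ (inv s) e, inv s)·(e,s)·(θ (inv s) e, inv s) =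 (θ (inv s) e, inv s); (4) (e,s) ∈ E ⋊ S is idempotent for this product iff s is an idempotent of S, and any two idempotents of E ⋊ S commute. Hence E ⋊ S is an inverse semigroup. -/
/-- For a partial action `(D, θ)` of an inverse semigroup `S` on a meet
semilattice `E` by isomorphisms between ideals, the set
`E ⋊ S = {(e,s) | e ∈ D (inv s)}` with product
`(e,s)·(f,t) = (θ s (θ (inv s) e ⊓ f), s * t)` is an inverse semigroup:
(1) the product is well defined; (2) it is associative on `E ⋊ S`; (3) every
`(e,s) ∈ E ⋊ S` has `(θ (inv s) e, inv s) ∈ E ⋊ S` as an inverse; (4) `(e,s)` is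
idempotent iff `s` is idempotent, and any two idempotents of `E ⋊ S` commute. -/
theorem semidirect_product_is_inverse_semigroup
    {S : Type*} {E : Type*} [Semigroup S] [SemilatticeInf E] (inv : S → S)
    -- `S` is an inverse semigroup
    (h1 : ∀ s : S, s * inv s * s = s)
    (h2 : ∀ s : S, inv s * s * inv s = inv s)
    (hcomm : ∀ e f : S, e * e = e → f * f = f → e * f = f * e)
    -- `(D, θ)` is a partial action of `S` on `E` by isomorphisms between ideals
    (D : S → Set E) (θ : S → E → E)
    (hideal : ∀ (s : S), ∀ x ∈ D s, ∀ y : E, y ≤ x → y ∈ D s)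
    (hmaps : ∀ (s : S), ∀ x ∈ D s, θ s x ∈ D (inv s))
    (hback : ∀ (s : S), ∀ x ∈ D s, θ (inv s) (θ s x) = x)
    (hmono : ∀ (s : S), ∀ x ∈ D s, ∀ x' ∈ D s, x ≤ x' → θ s x ≤ θ s x')
    (hmul : ∀ (s t : S) (x : E), x ∈ D t → θ t x ∈ D s →
      x ∈ D (s * t) ∧ θ (s * t) x = θ s (θ t x))
    -- the product on `E ⋊ S`
    (mul : E × S → E × S → E × S)
    (hmuldef : ∀ p q : E × S,
      mul p q = (θ p.2 (θ (inv p.2) p.1 ⊓ q.1), p.2 * q.2)) :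
    -- (1) well-definedness
    (∀ (e : E) (s : S) (f : E) (t : S), e ∈ D (inv s) → f ∈ D (inv t) →
      θ (inv s) e ⊓ f ∈ D s ∧ θ s (θ (inv s) e ⊓ f) ∈ D (inv (s * t))) ∧
    -- (2) associativity on `E ⋊ S`
    (∀ p q r : E × S, p.1 ∈ D (inv p.2) → q.1 ∈ D (inv q.2) → r.1 ∈ D (inv r.2) →
      mul (mul p q) r = mul p (mul q r)) ∧
    -- (3) inverses
    (∀ p : E × S, p.1 ∈ D (inv p.2) →
      θ (inv p.2) p.1 ∈ D (inv (inv p.2)) ∧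
      mul (mul p (θ (inv p.2) p.1, inv p.2)) p = p ∧
      mul (mul (θ (inv p.2) p.1, inv p.2) p) (θ (inv p.2) p.1, inv p.2) =
        (θ (inv p.2) p.1, inv p.2)) ∧
    -- (4) idempotents
    (∀ p : E × S, p.1 ∈ D (inv p.2) → (mul p p = p ↔ p.2 * p.2 = p.2)) ∧
    (∀ p q : E × S, p.1 ∈ D (inv p.2) → q.1 ∈ D (inv q.2) →
      mul p p = p → mul q q = q → mul p q = mul q p) := by
  -- uniqueness of inverses in the inverse semigroup `S`
  have key : ∀ t x y : S, t * x * t = t → x * t * x = x → t * y * t = t → y * t * y = y →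
      x = y := by
    intro t x y htxt hxtx htyt hyty
    have htx : (t * x) * (t * x) = t * x := by rw [← mul_assoc, htxt]
    have hty : (t * y) * (t * y) = t * y := by rw [← mul_assoc, htyt]
    have hxt : (x * t) * (x * t) = x * t := by rw [← mul_assoc, hxtx]
    have hyt : (y * t) * (y * t) = y * t := by rw [← mul_assoc, hyty]
    have hx : x = x * t * y := by
      calc x = x * t * x := hxtx.symm
        _ = x * (t * y * t) * x := by rw [htyt]
        _ = x * ((t * y) * (t * x)) := by simp only [mul_assoc]
        _ = x * ((t * x) * (t * y)) := by rw [hcomm _ _ htx hty]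
        _ = (x * (t * x)) * (t * y) := by simp only [mul_assoc]
        _ = x * t * y := by simp only [← mul_assoc]; rw [hxtx]
    have hy : y = x * t * y := by
      calc y = y * t * y := hyty.symm
        _ = y * (t * x * t) * y := by rw [htxt]
        _ = ((y * t) * (x * t)) * y := by simp only [mul_assoc]
        _ = ((x * t) * (y * t)) * y := by rw [hcomm _ _ hxt hyt]
        _ = (x * t) * (y * t * y) := by simp only [mul_assoc]
        _ = x * t * y := by rw [hyty]
    exact hx.trans hy.symm
  have inv_inv : ∀ s : S, inv (inv s) = s := fun s =>
    (key (inv s) s (inv (inv s)) (h2 s) (h1 s) (h1 (inv s)) (h2 (inv s))).symm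
  have idem_inv : ∀ f : S, f * f = f → inv f = f := by
    intro f hf
    exact key f (inv f) f (h1 f) (h2 f) (by rw [hf, hf]) (by rw [hf, hf])
  have hii1 : ∀ t : S, (t * inv t) * (t * inv t) = t * inv t := fun t => by
    rw [← mul_assoc, h1]
  have hii2 : ∀ s : S, (inv s * s) * (inv s * s) = inv s * s := fun s => by
    rw [← mul_assoc, h2]
  have claimA : ∀ s t : S, (s * t) * (inv t * inv s) * (s * t) = s * t := by
    intro s t
    have e1 : s * (inv s * s) = s := by rw [← mul_assoc, h1]
    calc (s * t) * (inv t * inv s) * (s * t)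
        = s * (((t * inv t) * (inv s * s)) * t) := by simp only [mul_assoc]
      _ = s * (((inv s * s) * (t * inv t)) * t) := by rw [hcomm _ _ (hii1 t) (hii2 s)]
      _ = (s * (inv s * s)) * ((t * inv t) * t) := by simp only [mul_assoc]
      _ = s * t := by rw [e1, h1]
  have claimB : ∀ s t : S, (inv t * inv s) * (s * t) * (inv t * inv s) = inv t * inv s := by
    intro s t
    have e2 : inv t * (t * inv t) = inv t := by rw [← mul_assoc, h2]
    calc (inv t * inv s) * (s * t) * (inv t * inv s)
        = inv t * (((inv s * s) * (t * inv t)) * inv s) := by simp only [mul_assoc]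
      _ = inv t * (((t * inv t) * (inv s * s)) * inv s) := by rw [hcomm _ _ (hii2 s) (hii1 t)]
      _ = (inv t * (t * inv t)) * ((inv s * s) * inv s) := by simp only [mul_assoc]
      _ = inv t * inv s := by rw [e2, h2]
  have inv_mul : ∀ s t : S, inv (s * t) = inv t * inv s := fun s t =>
    key (s * t) (inv (s * t)) (inv t * inv s) (h1 _) (h2 _) (claimA s t) (claimB s t)
  -- basic facts about the partial action
  have F1a : ∀ (s : S), ∀ x ∈ D (inv s), θ (inv s) x ∈ D s := by
    intro s x hx
    have := hmaps (inv s) x hx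
    rwa [inv_inv] at this
  have F1b : ∀ (s : S), ∀ x ∈ D (inv s), θ s (θ (inv s) x) = x := by
    intro s x hx
    have := hback (inv s) x hx
    rwa [inv_inv] at this
  -- θ s preserves meets of elements of D s
  have G : ∀ (s : S), ∀ x ∈ D s, ∀ y ∈ D s, θ s (x ⊓ y) = θ s x ⊓ θ s y := by
    intro s x hx y hy
    have hxy : x ⊓ y ∈ D s := hideal s x hx _ inf_le_left
    refine le_antisymm
      (le_inf (hmono s _ hxy _ hx inf_le_left) (hmono s _ hxy _ hy inf_le_right)) ?_
    have hz : θ s x ⊓ θ s y ∈ D (inv s) := hideal (inv s) _ (hmaps s x hx) _ inf_le_left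
    have hz' : θ (inv s) (θ s x ⊓ θ s y) ∈ D s := F1a s _ hz
    have hlx : θ (inv s) (θ s x ⊓ θ s y) ≤ x := by
      have := hmono (inv s) _ hz _ (hmaps s x hx) inf_le_left
      rwa [hback s x hx] at this
    have hly : θ (inv s) (θ s x ⊓ θ s y) ≤ y := by
      have := hmono (inv s) _ hz _ (hmaps s y hy) inf_le_right
      rwa [hback s y hy] at this
    have := hmono s _ hz' _ hxy (le_inf hlx hly)
    rwa [F1b s _ hz] at this
  -- the well-definedness package, with the extra key identity
  have W : ∀ (s t : S) (e f : E), e ∈ D (inv s) → f ∈ D (inv t) →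
      θ (inv s) e ⊓ f ∈ D s ∧ θ s (θ (inv s) e ⊓ f) ∈ D (inv (s * t)) ∧
        θ (inv (s * t)) (θ s (θ (inv s) e ⊓ f)) = θ (inv t) (θ (inv s) e ⊓ f) := by
    intro s t e f he hf
    have hg : θ (inv s) e ⊓ f ∈ D s := hideal s _ (F1a s e he) _ inf_le_left
    have hgt : θ (inv s) e ⊓ f ∈ D (inv t) := hideal (inv t) f hf _ inf_le_right
    have hx : θ s (θ (inv s) e ⊓ f) ∈ D (inv s) := hmaps s _ hg
    have hx2 : θ (inv s) (θ s (θ (inv s) e ⊓ f)) ∈ D (inv t) := by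
      rw [hback s _ hg]; exact hgt
    have hm := hmul (inv t) (inv s) _ hx hx2
    refine ⟨hg, ?_, ?_⟩
    · rw [inv_mul]; exact hm.1
    · rw [inv_mul, hm.2, hback s _ hg]
  -- θ s is the identity on D s for idempotent s
  have idfix : ∀ s : S, s * s = s → ∀ x ∈ D s, θ s x = x := by
    intro s hs x hx
    have hinvs : inv s = s := idem_inv s hs
    have hx' : θ s x ∈ D s := by have := hmaps s x hx; rwa [hinvs] at this
    have h1x := (hmul s s x hx hx').2
    rw [hs] at h1x
    have h2x := hback s x hx
    rw [hinvs] at h2x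
    rw [h1x]; exact h2x
  refine ⟨?_, ?_, ?_, ?_, ?_⟩
  · -- (1) well-definedness
    intro e s f t he hf
    exact ⟨(W s t e f he hf).1, (W s t e f he hf).2.1⟩
  · -- (2) associativity
    rintro ⟨e, s⟩ ⟨f, t⟩ ⟨g, u⟩ he hf hg
    replace he : e ∈ D (inv s) := he
    replace hf : f ∈ D (inv t) := hf
    replace hg : g ∈ D (inv u) := hg
    simp only [hmuldef]
    refine Prod.ext ?_ (mul_assoc s t u)
    dsimp only
    rw [(W s t e f he hf).2.2]
    have haf : θ (inv s) e ⊓ f ∈ D (inv t) := hideal (inv t) f hf _ inf_le_right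
    have hArr : θ (inv t) (θ (inv s) e ⊓ f) ∈ D t := F1a t _ haf
    have hb : θ (inv t) f ∈ D t := F1a t f hf
    have hbg : θ (inv t) f ⊓ g ∈ D t := hideal t _ hb _ inf_le_left
    have hle : θ (inv t) (θ (inv s) e ⊓ f) ≤ θ (inv t) f :=
      hmono (inv t) _ haf _ hf inf_le_right
    have hc : θ (inv t) (θ (inv s) e ⊓ f) ⊓ g ∈ D t := hideal t _ hArr _ inf_le_left
    have hc2 : θ (inv t) (θ (inv s) e ⊓ f) ⊓ g
        = θ (inv t) (θ (inv s) e ⊓ f) ⊓ (θ (inv t) f ⊓ g) := by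
      rw [← inf_assoc, inf_eq_left.mpr hle]
    have hθtc : θ t (θ (inv t) (θ (inv s) e ⊓ f) ⊓ g)
        = θ (inv s) e ⊓ θ t (θ (inv t) f ⊓ g) := by
      rw [hc2, G t _ hArr _ hbg, F1b t _ haf]
      have hlef : θ t (θ (inv t) f ⊓ g) ≤ f := by
        have := hmono t _ hbg _ hb inf_le_left
        rwa [F1b t f hf] at this
      rw [inf_assoc, inf_eq_right.mpr hlef]
    have hts : θ t (θ (inv t) (θ (inv s) e ⊓ f) ⊓ g) ∈ D s := by
      rw [hθtc]
      exact hideal s _ (F1a s e he) _ inf_le_left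
    rw [(hmul s t _ hc hts).2, hθtc]
  · -- (3) inverses
    rintro ⟨e, s⟩ hp
    replace hp : e ∈ D (inv s) := hp
    have ha : θ (inv s) e ∈ D s := F1a s e hp
    refine ⟨hmaps (inv s) e hp, ?_, ?_⟩
    · have hss : (s * inv s) * (s * inv s) = s * inv s := by rw [← mul_assoc, h1]
      have hinvss : inv (s * inv s) = s * inv s := idem_inv _ hss
      have hge : θ (s * inv s) e = e := by
        rw [(hmul s (inv s) e hp ha).2, F1b s e hp]
      simp only [hmuldef]
      rw [inf_idem, F1b s e hp, hinvss, hge, inf_idem, hge, h1]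
    · have hss' : (inv s * s) * (inv s * s) = inv s * s := by rw [← mul_assoc, h2]
      have hinvss' : inv (inv s * s) = inv s * s := idem_inv _ hss'
      have hsa : θ s (θ (inv s) e) ∈ D (inv s) := by rw [F1b s e hp]; exact hp
      have hga : θ (inv s * s) (θ (inv s) e) = θ (inv s) e := by
        rw [(hmul (inv s) s _ ha hsa).2, F1b s e hp]
      simp only [hmuldef]
      rw [inv_inv, F1b s e hp, inf_idem, hinvss', hga, inf_idem, hga, h2]
  · -- (4) idempotency criterion
    rintro ⟨e, s⟩ hp
    replace hp : e ∈ D (inv s) := hp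
    constructor
    · intro h
      simpa [hmuldef] using congrArg Prod.snd h
    · intro hs
      have hinvs : inv s = s := idem_inv s hs
      have he : e ∈ D s := by rwa [hinvs] at hp
      simp only [hmuldef]
      rw [hinvs, idfix s hs e he, inf_idem, idfix s hs e he, hs]
  · -- (4) idempotents commute
    rintro ⟨e, s⟩ ⟨f, t⟩ hp hq hpp hqq
    replace hp : e ∈ D (inv s) := hp
    replace hq : f ∈ D (inv t) := hq
    have hs : s * s = s := by simpa [hmuldef] using congrArg Prod.snd hpp
    have ht : t * t = t := by simpa [hmuldef] using congrArg Prod.snd hqq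
    have hinvs : inv s = s := idem_inv s hs
    have hinvt : inv t = t := idem_inv t ht
    have he : e ∈ D s := by rwa [hinvs] at hp
    have hf' : f ∈ D t := by rwa [hinvt] at hq
    have hef : e ⊓ f ∈ D s := hideal s e he _ inf_le_left
    have hfe : f ⊓ e ∈ D t := hideal t f hf' _ inf_le_left
    simp only [hmuldef]
    rw [hinvs, hinvt, idfix s hs e he, idfix t ht f hf', idfix s hs _ hef,
      idfix t ht _ hfe, hcomm s t hs ht, inf_comm e f]
end

section
/- Let S be an inverse semigroup and ρ an idempotent pure congruence on S. If ρ s t and s * inv s = t * inv t, then s = t. (Equivalently, the intersection of ρ with Green's relation R is trivial, so the map s ↦ (s * inv s, ⟦s⟧ρ) is injective.) -/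
/-- Uniqueness of inverses in a semigroup with commuting idempotents. -/
private lemma inv_unique' {S : Type*} [Semigroup S]
    (hcomm : ∀ e f : S, e * e = e → f * f = f → e * f = f * e)
    (x a b : S) (hxa : x * a * x = x) (hax : a * x * a = a)
    (hxb : x * b * x = x) (hbx : b * x * b = b) : a = b := by
  have hxaI : (x * a) * (x * a) = x * a := by rw [← mul_assoc, hxa]
  have hxbI : (x * b) * (x * b) = x * b := by rw [← mul_assoc, hxb]
  have haxI : (a * x) * (a * x) = a * x := by rw [← mul_assoc, hax]
  have hbxI : (b * x) * (b * x) = b * x := by rw [← mul_assoc, hbx]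
  have haxr : a * (x * a) = a := by rw [← mul_assoc, hax]
  have hbxr : b * (x * b) = b := by rw [← mul_assoc, hbx]
  have hxbE : ∀ c : S, x * (b * (x * c)) = x * c := fun c => by
    rw [← mul_assoc, ← mul_assoc, hxb]
  have haxE : ∀ c : S, a * (x * (a * c)) = a * c := fun c => by
    rw [← mul_assoc, ← mul_assoc, hax]
  have hxaE : ∀ c : S, x * (a * (x * c)) = x * c := fun c => by
    rw [← mul_assoc, ← mul_assoc, hxa]
  -- commuted idempotents, right-associated
  have cXY : x * (b * (x * a)) = x * (a * (x * b)) := by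
    simpa only [mul_assoc] using hcomm _ _ hxbI hxaI
  have cBA : ∀ c : S, b * (x * (a * (x * c))) = a * (x * (b * (x * c))) := fun c => by
    simpa only [mul_assoc] using congrArg (· * c) (hcomm _ _ hbxI haxI)
  have ha : a = a * (x * b) := by
    calc a = a * (x * a) := haxr.symm
    _ = a * (x * (b * (x * a))) := by rw [hxbE a]
    _ = a * (x * (a * (x * b))) := by rw [cXY]
    _ = a * (x * b) := haxE (x * b)
  have hb : b = a * (x * b) := by
    calc b = b * (x * b) := hbxr.symm
    _ = b * (x * (a * (x * b))) := by rw [hxaE b]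
    _ = a * (x * (b * (x * b))) := cBA b
    _ = a * (x * b) := by rw [hbxr]
  rw [ha, ← hb]

/-- For an idempotent pure congruence `ρ` on an inverse semigroup `S`,
if `ρ s t` and `s * inv s = t * inv t` then `s = t` (the intersection of `ρ` with
Green's relation `R` is trivial). -/
theorem idempotent_pure_congruence_inter_greenR_trivial
    {S : Type*} [Semigroup S] (inv : S → S)
    -- `S` is an inverse semigroup
    (h1 : ∀ s : S, s * inv s * s = s)
    (h2 : ∀ s : S, inv s * s * inv s = inv s)
    (hcomm : ∀ e f : S, e * e = e → f * f = f → e * f = f * e)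
    -- `ρ` is an idempotent pure congruence
    (ρ : S → S → Prop)
    (hρeq : Equivalence ρ)
    (hρmul : ∀ s t u v : S, ρ s t → ρ u v → ρ (s * u) (t * v))
    (hρpure : ∀ e s : S, ρ e s → e * e = e → s * s = s) :
    ∀ s t : S, ρ s t → s * inv s = t * inv t → s = t := by
  intro s t hst hR
  have h1r : ∀ u : S, u * (inv u * u) = u := fun u => by rw [← mul_assoc, h1]
  have h2r : ∀ u : S, inv u * (u * inv u) = inv u := fun u => by rw [← mul_assoc, h2]
  have h2E : ∀ (u c : S), inv u * (u * (inv u * c)) = inv u * c := fun u c => by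
    rw [← mul_assoc, ← mul_assoc, h2]
  have hRe : ∀ c : S, s * (inv s * c) = t * (inv t * c) := fun c => by
    rw [← mul_assoc, ← mul_assoc, hR]
  -- inv t * t is idempotent
  have hett : (inv t * t) * (inv t * t) = inv t * t := by
    simp only [mul_assoc]; rw [h1r t]
  -- e := inv t * s is idempotent, by idempotent-purity
  have hee : (inv t * s) * (inv t * s) = inv t * s :=
    hρpure _ _ (hρmul _ _ _ _ (hρeq.refl (inv t)) (hρeq.symm hst)) hett
  -- (inv t * t) * (inv t * s) = inv t * s
  have key1 : (inv t * t) * (inv t * s) = inv t * s := by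
    simpa only [mul_assoc] using h2E t s
  have key1c : (inv t * s) * (inv t * t) = inv t * s := by
    rw [hcomm _ _ hee hett]; exact key1
  -- s = t * (inv t * s)
  have hse : t * (inv t * s) = s := by rw [← hRe s, h1r]
  -- s * (inv t * s) = s
  have se : s * (inv t * s) = s := by
    calc s * (inv t * s) = (t * (inv t * s)) * (inv t * s) := by rw [hse]
    _ = t * (inv t * s) := by rw [mul_assoc, hee]
    _ = s := hse
  -- inv s = (inv t * s) * inv t, by uniqueness of inverses
  have hinv : inv s = (inv t * s) * inv t := by
    apply inv_unique' hcomm s (inv s) _ (h1 s) (h2 s)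
    · -- s * ((inv t * s) * inv t) * s = s
      rw [← mul_assoc s (inv t * s) (inv t), se, mul_assoc]
      exact se
    · -- ((inv t * s) * inv t) * s * ((inv t * s) * inv t) = (inv t * s) * inv t
      rw [mul_assoc (inv t * s) (inv t) s, hee, ← mul_assoc, hee]
  -- s * inv t = t * inv t
  have hsti : s * inv t = t * inv t := by
    rw [← hR, hinv, ← mul_assoc, se]
  -- inv t * s = inv t * t
  have key2 : inv t * s = inv t * t := by
    have h := congrArg (fun z => inv t * z * t) hsti
    simp only [mul_assoc] at h
    have key1cr : inv t * (s * (inv t * t)) = inv t * s := by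
      simpa only [mul_assoc] using key1c
    rw [key1cr, h1r t] at h
    exact h
  rw [← hse, key2, h1r]
end

section
/- Let S be an inverse semigroup and ρ an idempotent pure congruence on S. For all s, t, t₁ ∈ S with ρ t₁ s and s * inv s ≤ t₁ * inv t₁ (natural partial order), one has t₁ * ((inv t₁ * (s * inv s) * t₁) * (t * inv t)) * inv t₁ = (s * t) * inv (s * t). Consequently, in the semidirect product E(S) ⋊_δ̃ (S/ρ) the product of (s * inv s, ⟦s⟧) and (t * inv t, ⟦t⟧), computed via any representative t₁ of ⟦s⟧ whose Munn range contains s * inv s, equals ((s * t) * inv (s * t), ⟦s * t⟧); i.e. φ(s) = (s * inv s, ⟦s⟧) is a homomorphism. -/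
/-- Let `ρ` be an idempotent pure congruence on an inverse semigroup
`S`. For `s, t, t₁ ∈ S` with `ρ t₁ s` and `s * inv s ≤ t₁ * inv t₁` (natural
partial order), one has
`t₁ * ((inv t₁ * (s * inv s) * t₁) * (t * inv t)) * inv t₁ = (s * t) * inv (s * t)`.
Consequently `φ(s) = (s * inv s, ⟦s⟧)` is a homomorphism into the semidirect
product `E(S) ⋊_δ̃ (S/ρ)`. -/
theorem munn_product_formula
    {S : Type*} [Semigroup S] (inv : S → S)
    -- `S` is an inverse semigroup
    (h1 : ∀ s : S, s * inv s * s = s)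
    (h2 : ∀ s : S, inv s * s * inv s = inv s)
    (hcomm : ∀ e f : S, e * e = e → f * f = f → e * f = f * e)
    -- `ρ` is an idempotent pure congruence
    (ρ : S → S → Prop)
    (hρeq : Equivalence ρ)
    (hρmul : ∀ s t u v : S, ρ s t → ρ u v → ρ (s * u) (t * v))
    (hρpure : ∀ e s : S, ρ e s → e * e = e → s * s = s) :
    ∀ s t t₁ : S, ρ t₁ s →
      -- `s * inv s ≤ t₁ * inv t₁` in the natural partial order
      s * inv s = (s * inv s) * inv (s * inv s) * (t₁ * inv t₁) →
      t₁ * ((inv t₁ * (s * inv s) * t₁) * (t * inv t)) * inv t₁ =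
        (s * t) * inv (s * t) := by
  -- idempotency of s * inv s and inv s * s
  have idem1 : ∀ s : S, (s * inv s) * (s * inv s) = s * inv s := by
    intro s
    calc (s * inv s) * (s * inv s) = (s * inv s * s) * inv s := by
          simp only [mul_assoc]
      _ = s * inv s := by rw [h1]
  have idem2 : ∀ s : S, (inv s * s) * (inv s * s) = inv s * s := by
    intro s
    calc (inv s * s) * (inv s * s) = (inv s * s * inv s) * s := by
          simp only [mul_assoc]
      _ = inv s * s := by rw [h2]
  -- uniqueness of inverses
  have inv_unique : ∀ a x y : S, a * x * a = a → x * a * x = x →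
      a * y * a = a → y * a * y = y → x = y := by
    intro a x y hx1 hx2 hy1 hy2
    have ixa : (x * a) * (x * a) = x * a := by
      calc (x * a) * (x * a) = (x * a * x) * a := by simp only [mul_assoc]
        _ = x * a := by rw [hx2]
    have iya : (y * a) * (y * a) = y * a := by
      calc (y * a) * (y * a) = (y * a * y) * a := by simp only [mul_assoc]
        _ = y * a := by rw [hy2]
    have iax : (a * x) * (a * x) = a * x := by
      calc (a * x) * (a * x) = (a * x * a) * x := by simp only [mul_assoc]
        _ = a * x := by rw [hx1]
    have iay : (a * y) * (a * y) = a * y := by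
      calc (a * y) * (a * y) = (a * y * a) * y := by simp only [mul_assoc]
        _ = a * y := by rw [hy1]
    calc x = x * a * x := hx2.symm
      _ = (x * (a * y * a)) * x := by rw [hy1]
      _ = ((x * a) * (y * a)) * x := by simp only [mul_assoc]
      _ = ((y * a) * (x * a)) * x := by rw [hcomm _ _ ixa iya]
      _ = y * ((a * x * a) * x) := by simp only [mul_assoc]
      _ = y * (a * x) := by rw [hx1]
      _ = y * ((a * y * a) * x) := by rw [hy1]
      _ = y * ((a * y) * (a * x)) := by simp only [mul_assoc]
      _ = y * ((a * x) * (a * y)) := by rw [hcomm _ _ iay iax]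
      _ = ((y * a * x) * a) * y := by simp only [mul_assoc]
      _ = (((y * a * y) * a * x) * a) * y := by rw [hy2]
      _ = (y * a) * ((y * (a * x * a)) * y) := by simp only [mul_assoc]
      _ = (y * a) * ((y * a) * y) := by rw [hx1]
      _ = ((y * a) * (y * a)) * y := by simp only [mul_assoc]
      _ = y * a * y := by rw [iya]
      _ = y := hy2
  -- inverse of an idempotent is itself
  have inv_idem : ∀ e : S, e * e = e → inv e = e := by
    intro e he
    exact inv_unique e (inv e) e (h1 e) (h2 e) (by rw [he, he]) (by rw [he, he])
  -- inverse of a product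
  have inv_mul : ∀ a b : S, inv (a * b) = inv b * inv a := by
    intro a b
    refine inv_unique (a * b) (inv (a * b)) (inv b * inv a) (h1 _) (h2 _) ?_ ?_
    · calc (a * b) * (inv b * inv a) * (a * b)
          = a * ((b * inv b) * (inv a * a)) * b := by simp only [mul_assoc]
        _ = a * ((inv a * a) * (b * inv b)) * b := by
              rw [hcomm _ _ (idem1 b) (idem2 a)]
        _ = (a * inv a * a) * ((b * inv b) * b) := by simp only [mul_assoc]
        _ = a * b := by rw [h1, h1]
    · calc (inv b * inv a) * (a * b) * (inv b * inv a)
          = inv b * ((inv a * a) * (b * inv b)) * inv a := by simp only [mul_assoc]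
        _ = inv b * ((b * inv b) * (inv a * a)) * inv a := by
              rw [hcomm _ _ (idem2 a) (idem1 b)]
        _ = (inv b * b * inv b) * ((inv a * a) * inv a) := by simp only [mul_assoc]
        _ = inv b * inv a := by rw [h2, h2]
  intro s t t₁ hρ hle
  have he : (s * inv s) * (s * inv s) = s * inv s := idem1 s
  have hf : (t * inv t) * (t * inv t) = t * inv t := idem1 t
  have hT : (t₁ * inv t₁) * (t₁ * inv t₁) = t₁ * inv t₁ := idem1 t₁
  -- hle simplifies to (s * inv s) * (t₁ * inv t₁) = s * inv s
  have he_t : (s * inv s) * (t₁ * inv t₁) = s * inv s := by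
    rw [inv_idem (s * inv s) he, he] at hle
    exact hle.symm
  have step1 : t₁ * inv t₁ * (s * inv s) = s * inv s := by
    rw [hcomm _ _ hT he]; exact he_t
  -- g = inv s * t₁ is idempotent by idempotent purity
  have hg : (inv s * t₁) * (inv s * t₁) = inv s * t₁ :=
    hρpure (inv s * s) (inv s * t₁)
      (hρeq.symm (hρmul (inv s) (inv s) t₁ s (hρeq.refl (inv s)) hρ)) (idem2 s)
  -- k = s * (t * inv t) * inv s is idempotent
  have hk : (s * (t * inv t) * inv s) * (s * (t * inv t) * inv s)
      = s * (t * inv t) * inv s := by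
    calc (s * (t * inv t) * inv s) * (s * (t * inv t) * inv s)
        = s * ((t * inv t) * ((inv s * s) * (t * inv t))) * inv s := by
          simp only [mul_assoc]
      _ = s * ((t * inv t) * ((t * inv t) * (inv s * s))) * inv s := by
          rw [hcomm _ _ (idem2 s) hf]
      _ = s * (((t * inv t) * (t * inv t)) * (inv s * s)) * inv s := by
          simp only [mul_assoc]
      _ = s * ((t * inv t) * (inv s * s)) * inv s := by rw [hf]
      _ = s * ((inv s * s) * (t * inv t)) * inv s := by
          rw [hcomm _ _ hf (idem2 s)]
      _ = (s * inv s * s) * ((t * inv t) * inv s) := by simp only [mul_assoc]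
      _ = s * (t * inv t) * inv s := by rw [h1, ← mul_assoc]
  have hek : (s * inv s) * (s * (t * inv t) * inv s) = s * (t * inv t) * inv s := by
    calc (s * inv s) * (s * (t * inv t) * inv s)
        = (s * inv s * s) * ((t * inv t) * inv s) := by simp only [mul_assoc]
      _ = s * (t * inv t) * inv s := by rw [h1, ← mul_assoc]
  have step4 : (s * (t * inv t) * inv s) * (t₁ * inv t₁) = s * (t * inv t) * inv s := by
    calc (s * (t * inv t) * inv s) * (t₁ * inv t₁)
        = ((s * inv s) * (s * (t * inv t) * inv s)) * (t₁ * inv t₁) := by rw [hek]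
      _ = ((s * (t * inv t) * inv s) * (s * inv s)) * (t₁ * inv t₁) := by
          rw [hcomm _ _ he hk]
      _ = (s * (t * inv t) * inv s) * ((s * inv s) * (t₁ * inv t₁)) := by
          rw [mul_assoc]
      _ = (s * (t * inv t) * inv s) * (s * inv s) := by rw [he_t]
      _ = (s * inv s) * (s * (t * inv t) * inv s) := by rw [hcomm _ _ hk he]
      _ = s * (t * inv t) * inv s := hek
  calc t₁ * ((inv t₁ * (s * inv s) * t₁) * (t * inv t)) * inv t₁
      = (t₁ * inv t₁ * (s * inv s)) * (t₁ * ((t * inv t) * inv t₁)) := by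
        simp only [mul_assoc]
    _ = (s * inv s) * (t₁ * ((t * inv t) * inv t₁)) := by rw [step1]
    _ = s * (((inv s * t₁) * (t * inv t)) * inv t₁) := by simp only [mul_assoc]
    _ = s * (((t * inv t) * (inv s * t₁)) * inv t₁) := by rw [hcomm _ _ hg hf]
    _ = (s * (t * inv t) * inv s) * (t₁ * inv t₁) := by simp only [mul_assoc]
    _ = s * (t * inv t) * inv s := step4
    _ = (s * t) * (inv t * inv s) := by simp only [mul_assoc]
    _ = (s * t) * inv (s * t) := by rw [inv_mul]
end

section
/- Let S be an inverse semigroup and ρ an idempotent pure congruence on S. For every idempotent e of S: (i) e ∈ dom δ̃_{⟦e⟧} (indeed e ≤ inv e * e); (ii) for every idempotent f of S, if e ∈ dom δ̃_{⟦f⟧} (i.e. there is g with ρ g f and e ≤ inv g * g), then ρ (e * f) e, i.e. ⟦e⟧ ≤ ⟦f⟧ in S/ρ. Hence ⟦e⟧ is the minimum of the set of idempotent classes ⟦f⟧ with e ∈ dom δ̃_{⟦f⟧}, and since e ↦ ⟦e⟧ is a homomorphism of meet semilattices, the partial action δ̃ of S/ρ on E(S) is strict. -/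
/-- Let `ρ` be an idempotent pure congruence on an inverse semigroup
`S`. For every idempotent `e`: (i) `e ∈ dom δ̃_{⟦e⟧}`, indeed `e ≤ inv e * e`;
(ii) for every idempotent `f`, if `e ∈ dom δ̃_{⟦f⟧}` (i.e. there is `g` with
`ρ g f` and `e ≤ inv g * g`) then `ρ (e * f) e`, i.e. `⟦e⟧ ≤ ⟦f⟧` in `S/ρ`. Hence
the induced partial action `δ̃` of `S/ρ` on `E(S)` is strict. -/
theorem induced_munn_action_is_strict
    {S : Type*} [Semigroup S] (inv : S → S)
    -- `S` is an inverse semigroup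
    (h1 : ∀ s : S, s * inv s * s = s)
    (h2 : ∀ s : S, inv s * s * inv s = inv s)
    (hcomm : ∀ e f : S, e * e = e → f * f = f → e * f = f * e)
    -- `ρ` is an idempotent pure congruence
    (ρ : S → S → Prop)
    (hρeq : Equivalence ρ)
    (hρmul : ∀ s t u v : S, ρ s t → ρ u v → ρ (s * u) (t * v))
    (hρpure : ∀ e s : S, ρ e s → e * e = e → s * s = s) :
    ∀ e : S, e * e = e →
      -- (i) `e ≤ inv e * e`, so `e ∈ dom δ̃_{⟦e⟧}`
      (e = e * inv e * (inv e * e)) ∧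
      -- (ii) `⟦e⟧` is a lower bound of all idempotent classes `⟦f⟧`
      -- with `e ∈ dom δ̃_{⟦f⟧}`
      (∀ f : S, f * f = f →
        (∃ g : S, ρ g f ∧ e = e * inv e * (inv g * g)) → ρ (e * f) e) := by
  -- idempotents are self-inverse
  have hidem_inv : ∀ e : S, e * e = e → inv e = e := by
    intro a ha
    have hax : (a * inv a) * (a * inv a) = a * inv a := by
      calc (a * inv a) * (a * inv a) = (a * inv a * a) * inv a := by
            simp [mul_assoc]
        _ = a * inv a := by rw [h1]
    -- step 1 : a = a * inv a
    have s1 : a = a * inv a := by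
      calc a = a * inv a * a := (h1 a).symm
        _ = a * (a * inv a) := hcomm _ _ hax ha
        _ = (a * a) * inv a := by rw [mul_assoc]
        _ = a * inv a := by rw [ha]
    -- step 2 : inv a = inv a * a
    have s2 : inv a = inv a * a := by
      calc inv a = inv a * a * inv a := (h2 a).symm
        _ = inv a * (a * inv a) := by rw [mul_assoc]
        _ = inv a * a := by rw [← s1]
    -- step 3 : inv a is idempotent
    have s3 : inv a * inv a = inv a := by
      calc inv a * inv a = (inv a * a) * inv a := by rw [← s2]
        _ = inv a := h2 a
    -- step 4 : a and inv a commute, conclude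
    calc inv a = inv a * a := s2
      _ = a * inv a := (hcomm _ _ ha s3).symm
      _ = a * inv a * a * inv a := by rw [h1]
      _ = (a * inv a) * (a * inv a) := by rw [mul_assoc]
      _ = a * inv a := hax
      _ = a := s1.symm
  intro e he
  have hinv_e : inv e = e := hidem_inv e he
  constructor
  · rw [hinv_e]
    rw [he, he]
  · rintro f hf ⟨g, hgf, hle⟩
    have hg : g * g = g := hρpure f g (hρeq.symm hgf) hf
    have hinv_g : inv g = g := hidem_inv g hg
    have heg : e = e * g := by
      calc e = e * inv e * (inv g * g) := hle
        _ = e * g := by rw [hinv_e, hinv_g, he, hg]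
    have : ρ (e * f) (e * g) := hρmul e e f g (hρeq.refl e) (hρeq.symm hgf)
    rw [← heg] at this
    exact this
end

section
/- Let S be an inverse semigroup and ρ an idempotent pure congruence on S. Let e be an idempotent of S and s ∈ S such that e ∈ ran δ̃_{⟦s⟧} (i.e. there exists t with ρ t s and e ≤ t * inv t) and ρ e (s * inv s). Then there exists u ∈ S with ρ u s and u * inv u = e. Consequently the image of the embedding φ : s ↦ (s * inv s, ⟦s⟧) of S into E(S) ⋊_δ̃ (S/ρ) is exactly the subset E(S) ⋊ᵐ_δ̃ (S/ρ) = {(e, ⟦s⟧) : e ∈ ran δ̃_{⟦s⟧} and ρ e (s * inv s)}. -/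
/-- Uniqueness of inverses in an inverse semigroup. -/
theorem inv_unique_aux {S : Type*} [Semigroup S] (inv : S → S)
    (h1 : ∀ s : S, s * inv s * s = s)
    (h2 : ∀ s : S, inv s * s * inv s = inv s)
    (hcomm : ∀ e f : S, e * e = e → f * f = f → e * f = f * e)
    (u x : S) (ha : u * x * u = u) (hb : x * u * x = x) : x = inv u := by
  set y := inv u with hy
  have ha' : u * y * u = u := h1 u
  have hb' : y * u * y = y := h2 u
  have hux : (u*x)*(u*x) = u*x := by rw [← mul_assoc, ha]
  have huy : (u*y)*(u*y) = u*y := by rw [← mul_assoc, ha']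
  have hxu : (x*u)*(x*u) = x*u := by rw [← mul_assoc, hb]
  have hyu : (y*u)*(y*u) = y*u := by rw [← mul_assoc, hb']
  have hxuy : x*u*y = x := by
    calc x*u*y = x*u*x*u*y := by rw [hb]
      _ = x*((u*x)*(u*y)) := by simp only [mul_assoc]
      _ = x*((u*y)*(u*x)) := by rw [hcomm (u*x) (u*y) hux huy]
      _ = x*(u*y*u)*x := by simp only [mul_assoc]
      _ = x*u*x := by rw [ha']
      _ = x := hb
  calc x = x*u*y := hxuy.symm
    _ = x*u*(y*u*y) := by rw [hb']
    _ = ((x*u)*(y*u))*y := by simp only [mul_assoc]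
    _ = ((y*u)*(x*u))*y := by rw [hcomm (x*u) (y*u) hxu hyu]
    _ = y*(u*x*u)*y := by simp only [mul_assoc]
    _ = y*u*y := by rw [ha]
    _ = y := hb'

/-- Let `ρ` be an idempotent pure congruence on an inverse semigroup
`S`, `e` an idempotent and `s ∈ S` such that `e ∈ ran δ̃_{⟦s⟧}` (there is `t` with
`ρ t s` and `e ≤ t * inv t`) and `ρ e (s * inv s)`. Then there is `u` with `ρ u s`
and `u * inv u = e`. Consequently the image of `φ : s ↦ (s * inv s, ⟦s⟧)` is
exactly `E(S) ⋊ᵐ_δ̃ (S/ρ)`. -/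
theorem image_of_embedding_is_m_part
    {S : Type*} [Semigroup S] (inv : S → S)
    -- `S` is an inverse semigroup
    (h1 : ∀ s : S, s * inv s * s = s)
    (h2 : ∀ s : S, inv s * s * inv s = inv s)
    (hcomm : ∀ e f : S, e * e = e → f * f = f → e * f = f * e)
    -- `ρ` is an idempotent pure congruence
    (ρ : S → S → Prop)
    (hρeq : Equivalence ρ)
    (hρmul : ∀ s t u v : S, ρ s t → ρ u v → ρ (s * u) (t * v))
    (hρpure : ∀ e s : S, ρ e s → e * e = e → s * s = s) :
    ∀ e s : S, e * e = e →
      -- `e ∈ ran δ̃_{⟦s⟧}`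
      (∃ t : S, ρ t s ∧ e = e * inv e * (t * inv t)) →
      -- `α e = ⟦s⟧ * inv ⟦s⟧`
      ρ e (s * inv s) →
      ∃ u : S, ρ u s ∧ u * inv u = e := by
  rintro e s he ⟨t, hts, hle⟩ hes
  have hie : inv e = e :=
    (inv_unique_aux inv h1 h2 hcomm e e (by rw [he, he]) (by rw [he, he])).symm
  have htt : (t*inv t)*(t*inv t) = t*inv t := by rw [← mul_assoc, h1 t]
  have he' : e * (t*inv t) = e := by
    conv_rhs => rw [hle]
    rw [hie, he]
  have hinv : inv (e*t) = inv t * e := by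
    refine (inv_unique_aux inv h1 h2 hcomm (e*t) (inv t * e) ?_ ?_).symm
    · calc (e*t)*(inv t*e)*(e*t)
          = e*(t*inv t)*(e*(e*t)) := by simp only [mul_assoc]
        _ = e*(t*inv t)*(e*t) := by rw [← mul_assoc e e t, he]
        _ = e*((t*inv t)*e)*t := by simp only [mul_assoc]
        _ = e*(e*(t*inv t))*t := by rw [hcomm (t*inv t) e htt he]
        _ = (e*e)*(t*inv t)*t := by simp only [mul_assoc]
        _ = e*(t*inv t)*t := by rw [he]
        _ = e*(t*inv t*t) := by simp only [mul_assoc]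
        _ = e*t := by rw [h1]
    · calc (inv t*e)*(e*t)*(inv t*e)
          = inv t*(e*(e*(t*(inv t*e)))) := by simp only [mul_assoc]
        _ = inv t*(e*(t*(inv t*e))) := by rw [← mul_assoc e e, he]
        _ = inv t*((e*(t*inv t))*e) := by simp only [mul_assoc]
        _ = inv t*(((t*inv t)*e)*e) := by rw [hcomm e (t*inv t) he htt]
        _ = (inv t*t*inv t)*(e*e) := by simp only [mul_assoc]
        _ = inv t*(e*e) := by rw [h2]
        _ = inv t*e := by rw [he]
  have hu : (e*t) * inv (e*t) = e := by
    rw [hinv]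
    calc (e*t)*(inv t*e) = (e*(t*inv t))*e := by simp only [mul_assoc]
      _ = e*e := by rw [he']
      _ = e := he
  have hρu : ρ (e*t) s := by
    have h := hρmul e (s*inv s) t s hes hts
    rwa [h1 s] at h
  exact ⟨e*t, hρu, hu⟩
end

section
/- Let S be an inverse semigroup and ρ an idempotent pure congruence on S. Suppose that for every idempotent e of S and every s ∈ S with (∃ t, ρ t s ∧ e ≤ t * inv t) there exists u ∈ S with ρ u s and u * inv u = e (i.e. the embedding φ : s ↦ (s * inv s, ⟦s⟧) of S into E(S) ⋊_δ̃ (S/ρ) is surjective). Then ρ equals the minimum group congruence σ: for all s, t ∈ S, ρ s t holds iff there exists u with u ≤ s and u ≤ t; in particular σ is idempotent pure, i.e. S is E-unitary. -/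
/-- Uniqueness of inverses in a semigroup with commuting idempotents. -/
theorem IS_two_inv {S : Type*} [Semigroup S]
    (hcomm : ∀ e f : S, e * e = e → f * f = f → e * f = f * e)
    (x b c : S) (hb1 : x * b * x = x) (hb2 : b * x * b = b)
    (hc1 : x * c * x = x) (hc2 : c * x * c = c) : b = c := by
  have hbx : (b * x) * (b * x) = b * x := by
    rw [mul_assoc, ← mul_assoc x b x, hb1]
  have hcx : (c * x) * (c * x) = c * x := by
    rw [mul_assoc, ← mul_assoc x c x, hc1]
  have hxb : (x * b) * (x * b) = x * b := by
    rw [mul_assoc, ← mul_assoc b x b, hb2]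
  have hxc : (x * c) * (x * c) = x * c := by
    rw [mul_assoc, ← mul_assoc c x c, hc2]
  have key1 : b = b * (x * c) := by
    calc b = b * x * b := hb2.symm
      _ = b * ((x * c * x) * b) := by rw [hc1, ← mul_assoc]
      _ = b * ((x * c) * (x * b)) := by rw [← mul_assoc (x * c) x b]
      _ = b * ((x * b) * (x * c)) := by rw [hcomm (x * c) (x * b) hxc hxb]
      _ = (b * x * b) * (x * c) := by simp only [mul_assoc]
      _ = b * (x * c) := by rw [hb2]
  have key2 : c = b * (x * c) := by
    calc c = c * x * c := hc2.symm
      _ = c * ((x * b * x) * c) := by rw [hb1, ← mul_assoc]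
      _ = ((c * x) * (b * x)) * c := by simp only [mul_assoc]
      _ = ((b * x) * (c * x)) * c := by rw [hcomm (c * x) (b * x) hcx hbx]
      _ = (b * x) * (c * x * c) := by simp only [mul_assoc]
      _ = b * (x * c) := by rw [hc2, mul_assoc]
  exact key1.trans key2.symm

/-- Let `ρ` be an idempotent pure congruence on an inverse semigroup
`S`. If for every idempotent `e` and every `s ∈ S` with `∃ t, ρ t s ∧ e ≤ t * inv t`
there is `u` with `ρ u s` and `u * inv u = e` (i.e. the embedding
`φ : s ↦ (s * inv s, ⟦s⟧)` of `S` into `E(S) ⋊_δ̃ (S/ρ)` is surjective), then `ρ`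
equals the minimum group congruence `σ`; in particular `σ` is idempotent pure,
i.e. `S` is `E`-unitary. -/
theorem surjective_embedding_implies_group_congruence
    {S : Type*} [Semigroup S] (inv : S → S)
    -- `S` is an inverse semigroup
    (h1 : ∀ s : S, s * inv s * s = s)
    (h2 : ∀ s : S, inv s * s * inv s = inv s)
    (hcomm : ∀ e f : S, e * e = e → f * f = f → e * f = f * e)
    -- `ρ` is an idempotent pure congruence
    (ρ : S → S → Prop)
    (hρeq : Equivalence ρ)
    (hρmul : ∀ s t u v : S, ρ s t → ρ u v → ρ (s * u) (t * v))
    (hρpure : ∀ e s : S, ρ e s → e * e = e → s * s = s)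
    -- surjectivity of `φ`
    (hsurj : ∀ e s : S, e * e = e →
      (∃ t : S, ρ t s ∧ e = e * inv e * (t * inv t)) →
      ∃ u : S, ρ u s ∧ u * inv u = e) :
    -- `ρ = σ`
    (∀ s t : S, ρ s t ↔ ∃ u : S, u = u * inv u * s ∧ u = u * inv u * t) ∧
    -- `σ` is idempotent pure, i.e. `S` is `E`-unitary
    (∀ e s : S, (∃ u : S, u = u * inv u * e ∧ u = u * inv u * s) →
      e * e = e → s * s = s) := by
  -- basic idempotents
  have idem_r : ∀ s : S, (s * inv s) * (s * inv s) = s * inv s := by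
    intro s
    rw [mul_assoc, ← mul_assoc (inv s) s (inv s), h2]
  have idem_l : ∀ s : S, (inv s * s) * (inv s * s) = inv s * s := by
    intro s
    rw [mul_assoc, ← mul_assoc s (inv s) s, h1]
  -- inv is determined: of idempotent
  have inv_idem : ∀ e : S, e * e = e → inv e = e := by
    intro e he
    exact (IS_two_inv hcomm e e (inv e) (by rw [he, he]) (by rw [he, he])
      (h1 e) (h2 e)).symm
  -- inv of product
  have inv_mul : ∀ x y : S, inv (x * y) = inv y * inv x := by
    intro x y
    have pf1 : (x * y) * (inv y * inv x) * (x * y) = x * y := by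
      calc (x * y) * (inv y * inv x) * (x * y)
          = x * (((y * inv y) * (inv x * x)) * y) := by simp only [mul_assoc]
        _ = x * (((inv x * x) * (y * inv y)) * y) := by
            rw [hcomm (y * inv y) (inv x * x) (idem_r y) (idem_l x)]
        _ = (x * inv x * x) * (y * inv y * y) := by simp only [mul_assoc]
        _ = x * y := by rw [h1, h1]
    have pf2 : (inv y * inv x) * (x * y) * (inv y * inv x) = inv y * inv x := by
      calc (inv y * inv x) * (x * y) * (inv y * inv x)
          = inv y * (((inv x * x) * (y * inv y)) * inv x) := by simp only [mul_assoc]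
        _ = inv y * (((y * inv y) * (inv x * x)) * inv x) := by
            rw [hcomm (inv x * x) (y * inv y) (idem_l x) (idem_r y)]
        _ = (inv y * y * inv y) * (inv x * x * inv x) := by simp only [mul_assoc]
        _ = inv y * inv x := by rw [h2, h2]
    exact (IS_two_inv hcomm (x * y) (inv y * inv x) (inv (x * y)) pf1 pf2
      (h1 _) (h2 _)).symm
  -- idempotent purity: ρ a b → inv a * b idempotent
  have hpure2 : ∀ a b : S, ρ a b → (inv a * b) * (inv a * b) = inv a * b := by
    intro a b h
    exact hρpure (inv a * a) (inv a * b)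
      (hρmul (inv a) (inv a) a b (hρeq.refl (inv a)) h) (idem_l a)
  -- injectivity of φ
  have injective : ∀ a b : S, ρ a b → a * inv a = b * inv b → a = b := by
    intro a b hab heq
    have hp : (inv a * b) * (inv a * b) = inv a * b := hpure2 a b hab
    have hb : b = a * (inv a * b) := by
      calc b = b * inv b * b := (h1 b).symm
        _ = a * inv a * b := by rw [← heq]
        _ = a * (inv a * b) := by rw [mul_assoc]
    have hib : inv b = (inv a * b) * inv a := by
      have h00 := inv_mul a (inv a * b)
      rw [← hb, inv_idem (inv a * b) hp] at h00
      exact h00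
    have H : a * (inv a * b) * inv a = a * inv a := by
      calc a * (inv a * b) * inv a
          = a * ((inv a * b) * (inv a * b)) * inv a := by rw [hp]
        _ = (a * (inv a * b)) * ((inv a * b) * inv a) := by simp only [mul_assoc]
        _ = b * inv b := by rw [← hb, ← hib]
        _ = a * inv a := heq.symm
    have key : (inv a * b) * (inv a * a) = inv a * a := by
      have h5 : inv a * (a * (inv a * b) * inv a) * a
          = inv a * (a * inv a) * a := by rw [H]
      have hL : inv a * (a * (inv a * b) * inv a) * a
          = ((inv a * a) * (inv a * b)) * (inv a * a) := by simp only [mul_assoc]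
      have hR : inv a * (a * inv a) * a = (inv a * a) * (inv a * a) := by
        simp only [mul_assoc]
      have h6 : ((inv a * a) * (inv a * b)) * (inv a * a) = inv a * a := by
        rw [← hL, h5, hR, idem_l a]
      have hc := hcomm (inv a * a) (inv a * b) (idem_l a) hp
      calc (inv a * b) * (inv a * a)
          = (inv a * b) * ((inv a * a) * (inv a * a)) := by rw [idem_l a]
        _ = ((inv a * b) * (inv a * a)) * (inv a * a) := by simp only [mul_assoc]
        _ = ((inv a * a) * (inv a * b)) * (inv a * a) := by rw [← hc]
        _ = inv a * a := h6
    have ha : a * (inv a * a) = a := by rw [← mul_assoc, h1]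
    calc a = a * (inv a * a) := ha.symm
      _ = a * ((inv a * b) * (inv a * a)) := by rw [key]
      _ = a * ((inv a * a) * (inv a * b)) := by
          rw [hcomm (inv a * a) (inv a * b) (idem_l a) hp]
      _ = (a * (inv a * a)) * (inv a * b) := by simp only [mul_assoc]
      _ = a * (inv a * b) := by rw [ha]
      _ = b := hb.symm
  -- all idempotents are ρ-related (quotient is a group)
  have step : ∀ e f : S, e * e = e → f * f = f → ρ (e * f) e := by
    intro e f he hf
    have hef : (e * f) * (e * f) = e * f := by
      calc (e * f) * (e * f) = e * ((f * e) * f) := by simp only [mul_assoc]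
        _ = e * ((e * f) * f) := by rw [← hcomm e f he hf]
        _ = (e * e) * (f * f) := by simp only [mul_assoc]
        _ = e * f := by rw [he, hf]
    have hside : e * f = (e * f) * inv (e * f) * (e * inv e) := by
      rw [inv_mul e f, inv_idem e he, inv_idem f hf]
      calc e * f = (e * e) * f := by rw [he]
        _ = e * (e * f) := by rw [mul_assoc]
        _ = e * (f * e) := by rw [hcomm e f he hf]
        _ = (e * f) * e := by rw [← mul_assoc]
        _ = (e * (f * f)) * (e * (e * e)) := by rw [hf, he, he]
        _ = (e * f) * (f * e) * (e * e) := by simp only [mul_assoc]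
    obtain ⟨u, hu1, hu2⟩ := hsurj (e * f) e hef ⟨e, hρeq.refl e, hside⟩
    have hui : u * u = u := hρpure e u (hρeq.symm hu1) he
    have hue : u = e * f := by
      rw [← hu2, inv_idem u hui, hui]
    exact hue ▸ hu1
  have idemrel : ∀ e f : S, e * e = e → f * f = f → ρ e f := by
    intro e f he hf
    have s1 := step e f he hf
    have s2 := step f e hf he
    rw [hcomm f e hf he] at s2
    exact hρeq.trans (hρeq.symm s1) s2
  -- main equivalence
  have main : ∀ s t : S, ρ s t ↔ ∃ u : S, u = u * inv u * s ∧ u = u * inv u * t := by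
    intro s t
    constructor
    · intro hst
      have he : ((s * inv s) * (t * inv t)) * ((s * inv s) * (t * inv t))
          = (s * inv s) * (t * inv t) := by
        calc ((s * inv s) * (t * inv t)) * ((s * inv s) * (t * inv t))
            = (s * inv s) * (((t * inv t) * (s * inv s)) * (t * inv t)) := by
              simp only [mul_assoc]
          _ = (s * inv s) * (((s * inv s) * (t * inv t)) * (t * inv t)) := by
              rw [hcomm (t * inv t) (s * inv s) (idem_r t) (idem_r s)]
          _ = ((s * inv s) * (s * inv s)) * ((t * inv t) * (t * inv t)) := by
              simp only [mul_assoc]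
          _ = (s * inv s) * (t * inv t) := by rw [idem_r s, idem_r t]
      set e := (s * inv s) * (t * inv t) with hedef
      have hes : e * (s * inv s) = e := by
        calc e * (s * inv s)
            = (s * inv s) * ((t * inv t) * (s * inv s)) := by
              rw [hedef]; simp only [mul_assoc]
          _ = (s * inv s) * ((s * inv s) * (t * inv t)) := by
              rw [hcomm (t * inv t) (s * inv s) (idem_r t) (idem_r s)]
          _ = ((s * inv s) * (s * inv s)) * (t * inv t) := by
              simp only [mul_assoc]
          _ = e := by rw [idem_r s, hedef]
      have het : e * (t * inv t) = e := by
        calc e * (t * inv t)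
            = (s * inv s) * ((t * inv t) * (t * inv t)) := by
              rw [hedef]; simp only [mul_assoc]
          _ = e := by rw [idem_r t, hedef]
      have hside : e = e * inv e * (s * inv s) := by
        rw [inv_idem e he, he, hes]
      obtain ⟨u, hu1, hu2⟩ := hsurj e s he ⟨s, hρeq.refl s, hside⟩
      have heu : e * u = u := by rw [← hu2, h1]
      refine ⟨u, ?_, ?_⟩
      · have h7 : ρ u (e * s) := by
          have h70 := hρmul e e s u (hρeq.refl e) (hρeq.symm hu1)
          rw [heu] at h70
          exact hρeq.symm h70
        have h8 : (e * s) * inv (e * s) = e := by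
          calc (e * s) * inv (e * s)
              = (e * s) * (inv s * e) := by rw [inv_mul e s, inv_idem e he]
            _ = e * ((s * inv s) * e) := by simp only [mul_assoc]
            _ = e * (e * (s * inv s)) := by
                rw [hcomm (s * inv s) e (idem_r s) he]
            _ = (e * e) * (s * inv s) := by simp only [mul_assoc]
            _ = e := by rw [he, hes]
        have h9 : u = e * s := injective u (e * s) h7 (by rw [hu2, h8])
        rw [hu2]; exact h9
      · have h7 : ρ u (e * t) := by
          have h70 := hρmul e e t u (hρeq.refl e)
            (hρeq.symm (hρeq.trans hu1 hst))
          rw [heu] at h70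
          exact hρeq.symm h70
        have h8 : (e * t) * inv (e * t) = e := by
          calc (e * t) * inv (e * t)
              = (e * t) * (inv t * e) := by rw [inv_mul e t, inv_idem e he]
            _ = e * ((t * inv t) * e) := by simp only [mul_assoc]
            _ = e * (e * (t * inv t)) := by
                rw [hcomm (t * inv t) e (idem_r t) he]
            _ = (e * e) * (t * inv t) := by simp only [mul_assoc]
            _ = e := by rw [he, het]
        have h9 : u = e * t := injective u (e * t) h7 (by rw [hu2, h8])
        rw [hu2]; exact h9
    · rintro ⟨u, hus, hut⟩
      have r1 : ρ (u * inv u) (s * inv s) := idemrel _ _ (idem_r u) (idem_r s)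
      have r2 := hρmul (u * inv u) (s * inv s) s s r1 (hρeq.refl s)
      rw [← hus, h1 s] at r2
      have r1' : ρ (u * inv u) (t * inv t) := idemrel _ _ (idem_r u) (idem_r t)
      have r2' := hρmul (u * inv u) (t * inv t) t t r1' (hρeq.refl t)
      rw [← hut, h1 t] at r2'
      exact hρeq.trans (hρeq.symm r2) r2'
  exact ⟨main, fun e s h he => hρpure e s ((main e s).mpr h) he⟩
end

section
/- Let (D, θ) be a strict partial action of an inverse semigroup S on a meet semilattice E by isomorphisms between ideals, with strictness witness α : E → S, and let E ⋊ᵐ S = {(e, s) : e ∈ D (inv s) and α e = s * inv s}. If (e, s), (f, t) ∈ E ⋊ᵐ S, then their product (θ s (θ (inv s) e ⊓ f), s * t) also lies in E ⋊ᵐ S, and (θ (inv s) e, inv s) ∈ E ⋊ᵐ S. Hence E ⋊ᵐ S is an inverse subsemigroup of E ⋊ S. -/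
/-- For a strict partial action `(D, θ)` of an inverse semigroup `S`
on a meet semilattice `E` with strictness witness `α`, the subset
`E ⋊ᵐ S = {(e, s) : e ∈ D (inv s) ∧ α e = s * inv s}` is closed under the product
`(e,s)·(f,t) = (θ s (θ (inv s) e ⊓ f), s * t)` and under the inverse
`(e,s)⁻¹ = (θ (inv s) e, inv s)`; hence it is an inverse subsemigroup of
`E ⋊ S`. -/
theorem m_part_is_inverse_subsemigroup
    {S : Type*} {E : Type*} [Semigroup S] [SemilatticeInf E] (inv : S → S)
    -- `S` is an inverse semigroup
    (h1 : ∀ s : S, s * inv s * s = s)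
    (h2 : ∀ s : S, inv s * s * inv s = inv s)
    (hcomm : ∀ e f : S, e * e = e → f * f = f → e * f = f * e)
    -- `(D, θ)` is a partial action of `S` on `E` by isomorphisms between ideals
    (D : S → Set E) (θ : S → E → E)
    (hideal : ∀ (s : S), ∀ x ∈ D s, ∀ y : E, y ≤ x → y ∈ D s)
    (hmaps : ∀ (s : S), ∀ x ∈ D s, θ s x ∈ D (inv s))
    (hback : ∀ (s : S), ∀ x ∈ D s, θ (inv s) (θ s x) = x)
    (hmono : ∀ (s : S), ∀ x ∈ D s, ∀ x' ∈ D s, x ≤ x' → θ s x ≤ θ s x')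
    (hmul : ∀ (s t : S) (x : E), x ∈ D t → θ t x ∈ D s →
      x ∈ D (s * t) ∧ θ (s * t) x = θ s (θ t x))
    -- `(D, θ)` is strict with witness `α`
    (α : E → S)
    (hα1 : ∀ e : E, α e * α e = α e)
    (hα2 : ∀ e : E, e ∈ D (α e))
    (hα3 : ∀ (e : E) (g : S), g * g = g → e ∈ D g →
      α e = α e * inv (α e) * g)
    (hα4 : ∀ e f : E, α (e ⊓ f) = α e * α f) :
    -- closure under the product
    (∀ (e : E) (s : S) (f : E) (t : S),
      e ∈ D (inv s) → α e = s * inv s →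
      f ∈ D (inv t) → α f = t * inv t →
      θ s (θ (inv s) e ⊓ f) ∈ D (inv (s * t)) ∧
      α (θ s (θ (inv s) e ⊓ f)) = (s * t) * inv (s * t)) ∧
    -- closure under the inverse
    (∀ (e : E) (s : S), e ∈ D (inv s) → α e = s * inv s →
      θ (inv s) e ∈ D (inv (inv s)) ∧
      α (θ (inv s) e) = inv s * inv (inv s)) := by
  -- uniqueness of inverses
  have unique : ∀ a x y : S, a * x * a = a → x * a * x = x →
      a * y * a = a → y * a * y = y → x = y := by
    intro a x y hax hxx hay hyy
    have idem_xa : x * a * (x * a) = x * a := by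
      calc x * a * (x * a) = x * (a * x * a) := by simp only [mul_assoc]
        _ = x * a := by rw [hax]
    have idem_ya : y * a * (y * a) = y * a := by
      calc y * a * (y * a) = y * (a * y * a) := by simp only [mul_assoc]
        _ = y * a := by rw [hay]
    have idem_ax : a * x * (a * x) = a * x := by
      calc a * x * (a * x) = a * x * a * x := by simp only [mul_assoc]
        _ = a * x := by rw [hax]
    have idem_ay : a * y * (a * y) = a * y := by
      calc a * y * (a * y) = a * y * a * y := by simp only [mul_assoc]
        _ = a * y := by rw [hay]
    have cyx : x * a * (y * a) = y * a * (x * a) := hcomm _ _ idem_xa idem_ya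
    have cxy : a * x * (a * y) = a * y * (a * x) := hcomm _ _ idem_ax idem_ay
    have e1 : x = y * a * x := by
      calc x = x * a * x := hxx.symm
        _ = x * (a * y * a) * x := by rw [hay]
        _ = x * a * (y * a) * x := by simp only [mul_assoc]
        _ = y * a * (x * a) * x := by rw [cyx]
        _ = y * (a * x * a) * x := by simp only [mul_assoc]
        _ = y * a * x := by rw [hax]
    have e2 : y = y * a * x := by
      calc y = y * a * y := hyy.symm
        _ = y * (a * x * a) * y := by rw [hax]
        _ = y * (a * x * (a * y)) := by simp only [mul_assoc]
        _ = y * (a * y * (a * x)) := by rw [cxy]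
        _ = y * a * y * (a * x) := by simp only [mul_assoc]
        _ = y * (a * x) := by rw [hyy]
        _ = y * a * x := by rw [mul_assoc]
    exact e1.trans e2.symm
  have idem_r : ∀ s : S, (s * inv s) * (s * inv s) = s * inv s := by
    intro s
    calc s * inv s * (s * inv s) = s * inv s * s * inv s := by simp only [mul_assoc]
      _ = s * inv s := by rw [h1 s]
  have idem_l : ∀ s : S, (inv s * s) * (inv s * s) = inv s * s := by
    intro s
    calc inv s * s * (inv s * s) = inv s * (s * inv s * s) := by simp only [mul_assoc]
      _ = inv s * s := by rw [h1 s]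
  have inv_inv : ∀ s : S, inv (inv s) = s := fun s =>
    unique (inv s) (inv (inv s)) s (h1 (inv s)) (h2 (inv s)) (h2 s) (h1 s)
  have inv_idem : ∀ g : S, g * g = g → inv g = g := fun g hg =>
    unique g (inv g) g (h1 g) (h2 g) (by rw [hg, hg]) (by rw [hg, hg])
  have inv_mul : ∀ s t : S, inv (s * t) = inv t * inv s := by
    intro s t
    refine unique (s * t) (inv (s * t)) (inv t * inv s) (h1 _) (h2 _) ?_ ?_
    · calc s * t * (inv t * inv s) * (s * t)
          = s * (t * inv t * (inv s * s)) * t := by simp only [mul_assoc]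
        _ = s * (inv s * s * (t * inv t)) * t := by
            rw [hcomm (t * inv t) (inv s * s) (idem_r t) (idem_l s)]
        _ = s * inv s * s * (t * inv t * t) := by simp only [mul_assoc]
        _ = s * (t * inv t * t) := by rw [h1 s]
        _ = s * t := by rw [h1 t]
    · calc inv t * inv s * (s * t) * (inv t * inv s)
          = inv t * (inv s * s * (t * inv t)) * inv s := by simp only [mul_assoc]
        _ = inv t * (t * inv t * (inv s * s)) * inv s := by
            rw [hcomm (inv s * s) (t * inv t) (idem_l s) (idem_r t)]
        _ = inv t * t * inv t * (inv s * s * inv s) := by simp only [mul_assoc]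
        _ = inv t * (inv s * s * inv s) := by rw [h2 t]
        _ = inv t * inv s := by rw [h2 s]
  have αle : ∀ (x : E) (g : S), g * g = g → x ∈ D g → α x = α x * g := by
    intro x g hg hx
    have h := hα3 x g hg hx
    rw [inv_idem _ (hα1 x), hα1 x] at h
    exact h
  have θid : ∀ g : S, g * g = g → ∀ x ∈ D g, θ g x = x := by
    intro g hg x hx
    have hinv : inv g = g := inv_idem g hg
    have hx2 : θ g x ∈ D g := by have := hmaps g x hx; rwa [hinv] at this
    have h3 := (hmul g g x hx hx2).2
    rw [hg] at h3
    have h4 := hback g x hx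
    rw [hinv] at h4
    exact h3.trans h4
  have gidem : ∀ (s : S) (x : E),
      (s * α x * inv s) * (s * α x * inv s) = s * α x * inv s := by
    intro s x
    calc s * α x * inv s * (s * α x * inv s)
        = s * (α x * (inv s * s) * α x) * inv s := by simp only [mul_assoc]
      _ = s * (inv s * s * α x * α x) * inv s := by
          rw [hcomm (α x) (inv s * s) (hα1 x) (idem_l s)]
      _ = s * (inv s * s * (α x * α x)) * inv s := by simp only [mul_assoc]
      _ = s * (inv s * s * α x) * inv s := by rw [hα1 x]
      _ = s * inv s * s * (α x * inv s) := by simp only [mul_assoc]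
      _ = s * (α x * inv s) := by rw [h1 s]
      _ = s * α x * inv s := by rw [mul_assoc]
  have half : ∀ (s : S) (x : E), x ∈ D s →
      α (θ s x) = α (θ s x) * (s * α x * inv s) := by
    intro s x hx
    have hy1 : θ s x ∈ D (inv s) := hmaps s x hx
    have hbx : θ (inv s) (θ s x) = x := hback s x hx
    have hy2 : θ (inv s) (θ s x) ∈ D (α x) := by rw [hbx]; exact hα2 x
    have m1 := hmul (α x) (inv s) (θ s x) hy1 hy2
    have e2 : θ (α x * inv s) (θ s x) = x := by
      rw [m1.2, hbx, θid (α x) (hα1 x) x (hα2 x)]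
    have hy3 : θ (α x * inv s) (θ s x) ∈ D s := by rw [e2]; exact hx
    have m2 := hmul s (α x * inv s) (θ s x) m1.1 hy3
    have hmem : θ s x ∈ D (s * α x * inv s) := by rw [mul_assoc]; exact m2.1
    exact αle (θ s x) _ (gidem s x) hmem
  have lemA : ∀ (s : S) (x : E), x ∈ D s → α (θ s x) = s * α x * inv s := by
    intro s x hx
    have hy1 : θ s x ∈ D (inv s) := hmaps s x hx
    have h1' := half s x hx
    have h2' := half (inv s) (θ s x) hy1
    rw [hback s x hx, inv_inv s] at h2'
    have e3 : s * α x * inv s = (s * α x * inv s) * α (θ s x) := by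
      calc s * α x * inv s
          = s * (α x * (inv s * α (θ s x) * s)) * inv s := by rw [← h2']
        _ = s * (α x * (inv s * (α (θ s x) * (s * inv s)))) := by simp only [mul_assoc]
        _ = s * (α x * (inv s * (s * inv s * α (θ s x)))) := by
            rw [hcomm (α (θ s x)) (s * inv s) (hα1 _) (idem_r s)]
        _ = s * α x * (inv s * s * inv s) * α (θ s x) := by simp only [mul_assoc]
        _ = s * α x * inv s * α (θ s x) := by rw [h2 s]
    have cgy := hcomm (α (θ s x)) (s * α x * inv s) (hα1 _) (gidem s x)
    calc α (θ s x) = α (θ s x) * (s * α x * inv s) := h1'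
      _ = s * α x * inv s * α (θ s x) := cgy
      _ = s * α x * inv s := e3.symm
  constructor
  · intro e s f t he hαe hf hαf
    have hmem1 : θ (inv s) e ∈ D s := by
      have := hmaps (inv s) e he; rwa [inv_inv s] at this
    have hxs : θ (inv s) e ⊓ f ∈ D s := hideal s _ hmem1 _ inf_le_left
    have hxt : θ (inv s) e ⊓ f ∈ D (inv t) := hideal (inv t) f hf _ inf_le_right
    have hy : θ s (θ (inv s) e ⊓ f) ∈ D (inv s) := hmaps s _ hxs
    have hb : θ (inv s) (θ s (θ (inv s) e ⊓ f)) = θ (inv s) e ⊓ f := hback s _ hxs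
    have hy2 : θ (inv s) (θ s (θ (inv s) e ⊓ f)) ∈ D (inv t) := by rw [hb]; exact hxt
    have hmemst : θ s (θ (inv s) e ⊓ f) ∈ D (inv t * inv s) :=
      (hmul (inv t) (inv s) _ hy hy2).1
    constructor
    · rw [inv_mul s t]; exact hmemst
    · have hA := lemA s _ hxs
      have hαinf : α (θ (inv s) e ⊓ f) = inv s * s * (t * inv t) := by
        rw [hα4, hαf]
        have h5 := lemA (inv s) e he
        rw [hαe, inv_inv s] at h5
        rw [h5]
        calc inv s * (s * inv s) * s * (t * inv t)
            = inv s * s * inv s * s * (t * inv t) := by simp only [mul_assoc]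
          _ = inv s * s * (t * inv t) := by rw [h2 s]
      rw [hA, hαinf, inv_mul s t]
      rw [hcomm (inv s * s) (t * inv t) (idem_l s) (idem_r t)]
      calc s * (t * inv t * (inv s * s)) * inv s
          = s * t * (inv t * (inv s * s * inv s)) := by simp only [mul_assoc]
        _ = s * t * (inv t * inv s) := by rw [h2 s]
  · intro e s he hαe
    refine ⟨hmaps (inv s) e he, ?_⟩
    have hA := lemA (inv s) e he
    rw [hαe, inv_inv s] at hA
    rw [hA, inv_inv s]
    calc inv s * (s * inv s) * s = inv s * s * inv s * s := by simp only [mul_assoc]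
      _ = inv s * s := by rw [h2 s]
end

section
/- Let (D, θ) be a strict partial action of an inverse semigroup S on a meet semilattice E by isomorphisms between ideals, with strictness witness α : E → S, which is fully strict: for every s ∈ S there exists e ∈ D (inv s) with α e = s * inv s. Suppose moreover that E ⋊ᵐ S = E ⋊ S, i.e. every (e, s) with e ∈ D (inv s) satisfies α e = s * inv s. Then the natural partial order on S is trivial (s ≤ t implies s = t) and S is a group: S has exactly one idempotent. -/
lemma inv_unique_aux_s14 {S : Type*} [Semigroup S]
    (hcomm : ∀ e f : S, e * e = e → f * f = f → e * f = f * e)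
    (a x y : S) (hx1 : a * x * a = a) (hx2 : x * a * x = x)
    (hy1 : a * y * a = a) (hy2 : y * a * y = y) : x = y := by
  have hxa : (x * a) * (x * a) = x * a := by
    calc (x * a) * (x * a) = (x * a * x) * a := by simp [mul_assoc]
    _ = x * a := by rw [hx2]
  have hya : (y * a) * (y * a) = y * a := by
    calc (y * a) * (y * a) = (y * a * y) * a := by simp [mul_assoc]
    _ = y * a := by rw [hy2]
  have hax : (a * x) * (a * x) = a * x := by
    calc (a * x) * (a * x) = (a * x * a) * x := by simp [mul_assoc]
    _ = a * x := by rw [hx1]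
  have hay : (a * y) * (a * y) = a * y := by
    calc (a * y) * (a * y) = (a * y * a) * y := by simp [mul_assoc]
    _ = a * y := by rw [hy1]
  have k1 : x = y * a * x := by
    calc x = x * a * x := hx2.symm
    _ = x * (a * y * a) * x := by rw [hy1]
    _ = ((x * a) * (y * a)) * x := by simp [mul_assoc]
    _ = ((y * a) * (x * a)) * x := by rw [hcomm _ _ hxa hya]
    _ = y * a * (x * a * x) := by simp [mul_assoc]
    _ = y * a * x := by rw [hx2]
  have k2 : y = y * a * x := by
    calc y = y * a * y := hy2.symm
    _ = y * (a * x * a) * y := by rw [hx1]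
    _ = y * ((a * x) * (a * y)) := by simp [mul_assoc]
    _ = y * ((a * y) * (a * x)) := by rw [hcomm _ _ hax hay]
    _ = (y * a * y) * (a * x) := by simp [mul_assoc]
    _ = y * a * x := by rw [hy2]; rw [← mul_assoc]
  rw [k1, ← k2]


/-- Let `(D, θ)` be a fully strict partial action of an inverse
semigroup `S` on a meet semilattice `E` with strictness witness `α`. If moreover
`E ⋊ᵐ S = E ⋊ S` (every `(e, s)` with `e ∈ D (inv s)` satisfies
`α e = s * inv s`), then the natural partial order on `S` is trivial and `S` is a
group: `S` has exactly one idempotent. -/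
theorem m_part_equals_whole_implies_group
    {S : Type*} {E : Type*} [Semigroup S] [Nonempty S] [SemilatticeInf E]
    (inv : S → S)
    -- `S` is an inverse semigroup
    (h1 : ∀ s : S, s * inv s * s = s)
    (h2 : ∀ s : S, inv s * s * inv s = inv s)
    (hcomm : ∀ e f : S, e * e = e → f * f = f → e * f = f * e)
    -- `(D, θ)` is a partial action of `S` on `E` by isomorphisms between ideals
    (D : S → Set E) (θ : S → E → E)
    (hideal : ∀ (s : S), ∀ x ∈ D s, ∀ y : E, y ≤ x → y ∈ D s)
    (hmaps : ∀ (s : S), ∀ x ∈ D s, θ s x ∈ D (inv s))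
    (hback : ∀ (s : S), ∀ x ∈ D s, θ (inv s) (θ s x) = x)
    (hmono : ∀ (s : S), ∀ x ∈ D s, ∀ x' ∈ D s, x ≤ x' → θ s x ≤ θ s x')
    (hmul : ∀ (s t : S) (x : E), x ∈ D t → θ t x ∈ D s →
      x ∈ D (s * t) ∧ θ (s * t) x = θ s (θ t x))
    -- `(D, θ)` is strict with witness `α`
    (α : E → S)
    (hα1 : ∀ e : E, α e * α e = α e)
    (hα2 : ∀ e : E, e ∈ D (α e))
    (hα3 : ∀ (e : E) (g : S), g * g = g → e ∈ D g →
      α e = α e * inv (α e) * g)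
    (hα4 : ∀ e f : E, α (e ⊓ f) = α e * α f)
    -- `(D, θ)` is fully strict
    (hfull : ∀ s : S, ∃ e : E, e ∈ D (inv s) ∧ α e = s * inv s)
    -- `E ⋊ᵐ S = E ⋊ S`
    (hm : ∀ (e : E) (s : S), e ∈ D (inv s) → α e = s * inv s) :
    -- the natural partial order on `S` is trivial
    (∀ s t : S, s = s * inv s * t → s = t) ∧
    -- `S` has exactly one idempotent, i.e. `S` is a group
    (∃! e : S, e * e = e) := by
  -- inv of an idempotent is itself
  have hinv_idem : ∀ g : S, g * g = g → inv g = g := by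
    intro g hg
    exact inv_unique_aux_s14 hcomm g (inv g) g (h1 g) (h2 g)
      (by rw [hg, hg]) (by rw [hg, hg])
  -- α is constant
  have hαconst : ∀ e f : E, α e = α f := by
    intro e f
    have key : ∀ e f : E, α (e ⊓ f) = α e := by
      intro e f
      have h1' : e ⊓ f ∈ D (α e) := hideal _ e (hα2 e) _ inf_le_left
      have h2' : e ⊓ f ∈ D (inv (α e)) := by rw [hinv_idem _ (hα1 e)]; exact h1'
      have := hm (e ⊓ f) (α e) h2'
      rw [this, hinv_idem _ (hα1 e), hα1 e]
    calc α e = α (e ⊓ f) := (key e f).symm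
    _ = α (f ⊓ e) := by rw [inf_comm]
    _ = α f := key f e
  -- every element s*inv s equals α of any fixed element
  obtain ⟨s₀⟩ := ‹Nonempty S›
  obtain ⟨e₀, _, _⟩ := hfull s₀
  have hsi : ∀ s : S, s * inv s = α e₀ := by
    intro s
    obtain ⟨e, he, hαe⟩ := hfull s
    rw [← hαe, hαconst e e₀]
  have horder : ∀ s t : S, s = s * inv s * t → s = t := by
    intro s t hst
    have : s * inv s = t * inv t := by rw [hsi s, hsi t]
    calc s = s * inv s * t := hst
    _ = t * inv t * t := by rw [this]
    _ = t := h1 t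
  refine ⟨horder, α e₀, hα1 e₀, ?_⟩
  · intro g hg
    have : g * inv g = α e₀ := hsi g
    rw [← this, hinv_idem _ hg, hg]
end

section
/- Let S be an inverse semigroup and G a partial action of S on a set Y. Suppose G is globalizable: there exist a set X, an injective map ι : Y → X, and a global action Φ of S on X (a partial action satisfying (Φ s) ∘ (Φ t) = Φ (s * t) for all s, t) such that G s = {(y, y') ∈ Y × Y | (ι y, ι y') ∈ Φ s} for all s ∈ S. Then G is order-preserving: s ≤ t (natural partial order on S) implies G s ⊆ G t. -/
/-- A globalizable partial action `G` of an inverse semigroup `S` on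
a set `Y` is order-preserving: if `s ≤ t` in the natural partial order on `S`,
then `G s ⊆ G t`. -/
theorem globalizable_partial_action_is_order_preserving
    {S Y X : Type*} [Semigroup S] (inv : S → S)
    -- `S` is an inverse semigroup
    (h1 : ∀ s : S, s * inv s * s = s)
    (h2 : ∀ s : S, inv s * s * inv s = inv s)
    (hcomm : ∀ e f : S, e * e = e → f * f = f → e * f = f * e)
    -- `G` is a partial action of `S` on `Y`
    (G : S → Set (Y × Y))
    (hfun : ∀ (s : S) (x y y' : Y), (x, y) ∈ G s → (x, y') ∈ G s → y = y')
    (hinj : ∀ (s : S) (x x' y : Y), (x, y) ∈ G s → (x', y) ∈ G s → x = x')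
    (hGinv : ∀ s : S, G (inv s) = {p : Y × Y | (p.2, p.1) ∈ G s})
    (hGcomp : ∀ s t : S,
      {p : Y × Y | ∃ y : Y, (p.1, y) ∈ G t ∧ (y, p.2) ∈ G s} ⊆ G (s * t))
    -- a globalization of `G`: a global action `Φ` of `S` on `X`
    (ι : Y → X) (hι : Function.Injective ι)
    (Φ : S → Set (X × X))
    (hΦfun : ∀ (s : S) (x y y' : X), (x, y) ∈ Φ s → (x, y') ∈ Φ s → y = y')
    (hΦinj : ∀ (s : S) (x x' y : X), (x, y) ∈ Φ s → (x', y) ∈ Φ s → x = x')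
    (hΦinv : ∀ s : S, Φ (inv s) = {p : X × X | (p.2, p.1) ∈ Φ s})
    (hΦcomp : ∀ s t : S,
      {p : X × X | ∃ y : X, (p.1, y) ∈ Φ t ∧ (y, p.2) ∈ Φ s} = Φ (s * t))
    -- `G` is the restriction of `Φ` along `ι`
    (hrestr : ∀ s : S, G s = {p : Y × Y | (ι p.1, ι p.2) ∈ Φ s}) :
    ∀ s t : S, s = s * inv s * t → G s ⊆ G t := by
  intro s t hst p hp
  obtain ⟨y, y'⟩ := p
  have hΦs : (ι y, ι y') ∈ Φ s := by
    rw [hrestr] at hp; exact hp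
  rw [hst, ← hΦcomp (s * inv s) t] at hΦs
  obtain ⟨x, hx1, hx2⟩ := hΦs
  rw [← hΦcomp s (inv s)] at hx2
  obtain ⟨z, hz1, hz2⟩ := hx2
  rw [hΦinv] at hz1
  have : x = ι y' := hΦfun s z x (ι y') hz1 hz2
  rw [hrestr]
  show (ι y, ι y') ∈ Φ t
  rw [← this]
  exact hx1
end

section
/- Let T be an inverse semigroup and (T, X, Y) an L-triple: X is a partially ordered set that is down-directed (any two elements have a common lower bound); Φ is a global action of T on X such that each Φ t is an order isomorphism between nonempty order ideals of X (dom (Φ t) and ran (Φ t) are nonempty and downward closed, and for (x,y), (x',y') ∈ Φ t, x ≤ x' iff y ≤ y'); Y ⊆ X is an order ideal of X such that any two elements of Y have a greatest lower bound in X which lies in Y; and X = TY: for every x ∈ X there exist t ∈ T and y ∈ Y with (y, x) ∈ Φ t. Define the restriction G t = (Φ t) ∩ (Y × Y). Then G is a partial action of T on Y; for each t, dom (G t) is a nonempty downward-closed subset of Y and G t is order-preserving; and the set L(T,X,Y) = {(a,t) : a ∈ Y, a ∈ ran (Φ t), and the unique x with (x,a) ∈ Φ t lies in Y} equals {(a,t)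 : a ∈ ran (G t)}. -/
/-- Let `(T, X, Y)` be an `L`-triple with global action `Φ`. Then the
restriction `G t = (Φ t) ∩ (Y × Y)` is a partial action of `T` on `Y`; each
`dom (G t)` is a nonempty downward-closed subset of `Y` and each `G t` is
order-preserving; and `L(T,X,Y)` equals `{(a,t) : a ∈ ran (G t)}`. -/
theorem L_triple_restriction_is_partial_action
    {T X : Type*} [Semigroup T] [PartialOrder X] (inv : T → T)
    -- `T` is an inverse semigroup
    (h1 : ∀ s : T, s * inv s * s = s)
    (h2 : ∀ s : T, inv s * s * inv s = inv s)
    (hcomm : ∀ e f : T, e * e = e → f * f = f → e * f = f * e)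
    -- `X` is a down-directed poset
    (hdir : ∀ x y : X, ∃ z : X, z ≤ x ∧ z ≤ y)
    -- `Φ` is a global action of `T` on `X`
    (Φ : T → Set (X × X))
    (hΦfun : ∀ (t : T) (x y y' : X), (x, y) ∈ Φ t → (x, y') ∈ Φ t → y = y')
    (hΦinj : ∀ (t : T) (x x' y : X), (x, y) ∈ Φ t → (x', y) ∈ Φ t → x = x')
    (hΦinv : ∀ t : T, Φ (inv t) = {p : X × X | (p.2, p.1) ∈ Φ t})
    (hΦcomp : ∀ s t : T,
      {p : X × X | ∃ y : X, (p.1, y) ∈ Φ t ∧ (y, p.2) ∈ Φ s} = Φ (s * t))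
    -- each `Φ t` is an order isomorphism between nonempty order ideals of `X`
    (hdomne : ∀ t : T, ∃ p : X × X, p ∈ Φ t)
    (hdomIdeal : ∀ (t : T) (x : X), (∃ y, (x, y) ∈ Φ t) → ∀ z : X, z ≤ x →
      ∃ y, (z, y) ∈ Φ t)
    (hranIdeal : ∀ (t : T) (y : X), (∃ x, (x, y) ∈ Φ t) → ∀ z : X, z ≤ y →
      ∃ x, (x, z) ∈ Φ t)
    (hiso : ∀ (t : T) (x y x' y' : X), (x, y) ∈ Φ t → (x', y') ∈ Φ t →
      (x ≤ x' ↔ y ≤ y'))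
    -- `Y` is an order ideal of `X` in which pairs have greatest lower bounds
    (Y : Set X)
    (hYIdeal : ∀ y ∈ Y, ∀ z : X, z ≤ y → z ∈ Y)
    (hYmeet : ∀ y₁ ∈ Y, ∀ y₂ ∈ Y, ∃ m ∈ Y, m ≤ y₁ ∧ m ≤ y₂ ∧
      ∀ z : X, z ≤ y₁ → z ≤ y₂ → z ≤ m)
    -- `X = TY`
    (hTY : ∀ x : X, ∃ (t : T) (y : X), y ∈ Y ∧ (y, x) ∈ Φ t)
    -- the restriction `G`
    (G : T → Set (X × X))
    (hG : ∀ t : T, G t = Φ t ∩ {p : X × X | p.1 ∈ Y ∧ p.2 ∈ Y}) :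
    -- `G` is a partial action of `T` on `Y`
    ((∀ t : T, G (inv t) = {p : X × X | (p.2, p.1) ∈ G t}) ∧
     (∀ s t : T,
       {p : X × X | ∃ y : X, (p.1, y) ∈ G t ∧ (y, p.2) ∈ G s} ⊆ G (s * t))) ∧
    -- each `dom (G t)` is a nonempty downward-closed subset of `Y`,
    -- and `G t` is order-preserving
    (∀ t : T,
      (∃ x : X, ∃ y : X, (x, y) ∈ G t) ∧
      (∀ x : X, (∃ y, (x, y) ∈ G t) → ∀ z ∈ Y, z ≤ x → ∃ y, (z, y) ∈ G t) ∧
      (∀ x y x' y' : X, (x, y) ∈ G t → (x', y') ∈ G t → x ≤ x' → y ≤ y')) ∧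
    -- `L(T,X,Y) = {(a,t) : a ∈ ran (G t)}`
    ({p : X × T | p.1 ∈ Y ∧ (∃ x, (x, p.1) ∈ Φ p.2) ∧
        (∀ x, (x, p.1) ∈ Φ p.2 → x ∈ Y)} =
      {p : X × T | ∃ x, (x, p.1) ∈ G p.2}) := by
  refine ⟨⟨?_, ?_⟩, ?_, ?_⟩
  · intro t
    rw [hG, hG, hΦinv]
    ext ⟨x, y⟩
    constructor
    · rintro ⟨h, hy, hx⟩; exact ⟨h, hx, hy⟩
    · rintro ⟨h, hx, hy⟩; exact ⟨h, hy, hx⟩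
  · intro s t ⟨x, z⟩ ⟨y, hxy, hyz⟩
    rw [hG] at hxy hyz ⊢
    exact ⟨(hΦcomp s t) ▸ ⟨y, hxy.1, hyz.1⟩, hxy.2.1, hyz.2.2⟩
  · intro t
    refine ⟨?_, ?_, ?_⟩
    · -- nonemptiness
      obtain ⟨⟨x, y⟩, hxy⟩ := hdomne t
      obtain ⟨s, y0, hy0, _⟩ := hTY x
      obtain ⟨z, hzx, hzy0⟩ := hdir x y0
      obtain ⟨w, hzw⟩ := hdomIdeal t x ⟨y, hxy⟩ z hzx
      obtain ⟨v, hvw, hvy0⟩ := hdir w y0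
      obtain ⟨u, huv⟩ := hranIdeal t w ⟨z, hzw⟩ v hvw
      have huz : u ≤ z := (hiso t u v z w huv hzw).mpr hvw
      refine ⟨u, v, ?_⟩
      rw [hG]
      exact ⟨huv, hYIdeal y0 hy0 u (le_trans huz hzy0), hYIdeal y0 hy0 v hvy0⟩
    · intro x ⟨y, hxy⟩ z hz hzx
      rw [hG] at hxy
      obtain ⟨w, hzw⟩ := hdomIdeal t x ⟨y, hxy.1⟩ z hzx
      have hwy : w ≤ y := (hiso t z w x y hzw hxy.1).mp hzx
      exact ⟨w, by rw [hG]; exact ⟨hzw, hz, hYIdeal y hxy.2.2 w hwy⟩⟩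
    · intro x y x' y' hxy hxy' hle
      rw [hG] at hxy hxy'
      exact (hiso t x y x' y' hxy.1 hxy'.1).mp hle
  · ext ⟨a, t⟩
    simp only [Set.mem_setOf_eq]
    constructor
    · rintro ⟨haY, ⟨x, hx⟩, hall⟩
      exact ⟨x, by rw [hG]; exact ⟨hx, hall x hx, haY⟩⟩
    · rintro ⟨x, hx⟩
      rw [hG] at hx
      exact ⟨hx.2.2, ⟨x, hx.1⟩, fun x' hx' => (hΦinj t x' x a hx' hx.1) ▸ hx.2.1⟩
end

section
/- Let T be an inverse semigroup, (Y, ⊓, ≤) a meet semilattice, and G a strict partial action of T on Y (graph form) with strictness witness α : Y → T. Let (Φ', X', ι) be a globalization of G: Φ' is a global action of T on a set X', ι : Y → X' is injective, and G s = {(y,y') ∈ Y × Y | (ι y, ι y') ∈ Φ' s} for all s. Put X = {x ∈ X' | ∃ t ∈ T, ∃ y ∈ Y, (ι y, x) ∈ Φ' t} and Φ t = (Φ' t) ∩ (X × X). Then: ι(Y) ⊆ X; for every t and (x, x') ∈ Φ' t with x ∈ X one has x' ∈ X; dom (Φ t) = dom (Φ' t) ∩ X; Φ is a global action of T on X; and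 (Φ, X, ι) is again a globalization of G, now satisfying X = T·ι(Y). -/
/-- Let `G` be a strict partial action of an inverse semigroup `T` on
a meet semilattice `Y` with witness `α`, and `(Φ', X', ι)` a globalization of `G`.
Put `X = {x ∈ X' | ∃ t y, (ι y, x) ∈ Φ' t}` and `Φ t = (Φ' t) ∩ (X × X)`. Then
`ι(Y) ⊆ X`; `X` is invariant under each `Φ' t`; `dom (Φ t) = dom (Φ' t) ∩ X`;
`Φ` is a global action of `T` on `X`; and `(Φ, X, ι)` is again a globalization of
`G` with `X = T·ι(Y)`. -/
theorem globalization_restricts_to_TY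
    {T Y X' : Type*} [Semigroup T] [SemilatticeInf Y] (inv : T → T)
    -- `T` is an inverse semigroup
    (h1 : ∀ s : T, s * inv s * s = s)
    (h2 : ∀ s : T, inv s * s * inv s = inv s)
    (hcomm : ∀ e f : T, e * e = e → f * f = f → e * f = f * e)
    -- `G` is a partial action of `T` on `Y`
    (G : T → Set (Y × Y))
    (hfun : ∀ (s : T) (x y y' : Y), (x, y) ∈ G s → (x, y') ∈ G s → y = y')
    (hinj : ∀ (s : T) (x x' y : Y), (x, y) ∈ G s → (x', y) ∈ G s → x = x')
    (hGinv : ∀ s : T, G (inv s) = {p : Y × Y | (p.2, p.1) ∈ G s})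
    (hGcomp : ∀ s t : T,
      {p : Y × Y | ∃ y : Y, (p.1, y) ∈ G t ∧ (y, p.2) ∈ G s} ⊆ G (s * t))
    -- `G` is strict with witness `α`
    (α : Y → T)
    (hα1 : ∀ y : Y, α y * α y = α y)
    (hα2 : ∀ y : Y, ∃ y' : Y, (y, y') ∈ G (α y))
    (hα3 : ∀ (y : Y) (f : T), f * f = f → (∃ y' : Y, (y, y') ∈ G f) →
      α y = α y * inv (α y) * f)
    (hα4 : ∀ y₁ y₂ : Y, α (y₁ ⊓ y₂) = α y₁ * α y₂)
    -- `(Φ', X', ι)` is a globalization of `G`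
    (ι : Y → X') (hι : Function.Injective ι)
    (Φ' : T → Set (X' × X'))
    (hΦ'fun : ∀ (s : T) (x y y' : X'), (x, y) ∈ Φ' s → (x, y') ∈ Φ' s → y = y')
    (hΦ'inj : ∀ (s : T) (x x' y : X'), (x, y) ∈ Φ' s → (x', y) ∈ Φ' s → x = x')
    (hΦ'inv : ∀ s : T, Φ' (inv s) = {p : X' × X' | (p.2, p.1) ∈ Φ' s})
    (hΦ'comp : ∀ s t : T,
      {p : X' × X' | ∃ y : X', (p.1, y) ∈ Φ' t ∧ (y, p.2) ∈ Φ' s} = Φ' (s * t))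
    (hrestr : ∀ s : T, G s = {p : Y × Y | (ι p.1, ι p.2) ∈ Φ' s})
    -- the subset `X = T·ι(Y)` and the restricted action `Φ`
    (Xset : Set X')
    (hX : Xset = {x : X' | ∃ (t : T) (y : Y), (ι y, x) ∈ Φ' t})
    (Φ : T → Set (X' × X'))
    (hΦ : ∀ t : T, Φ t = Φ' t ∩ {p : X' × X' | p.1 ∈ Xset ∧ p.2 ∈ Xset}) :
    -- `ι(Y) ⊆ X`
    (∀ y : Y, ι y ∈ Xset) ∧
    -- `X` is invariant
    (∀ (t : T) (x x' : X'), (x, x') ∈ Φ' t → x ∈ Xset → x' ∈ Xset) ∧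
    -- `dom (Φ t) = dom (Φ' t) ∩ X`
    (∀ t : T, {x : X' | ∃ x', (x, x') ∈ Φ t} =
      {x : X' | ∃ x', (x, x') ∈ Φ' t} ∩ Xset) ∧
    -- `Φ` is a global action
    ((∀ t : T, Φ (inv t) = {p : X' × X' | (p.2, p.1) ∈ Φ t}) ∧
     (∀ s t : T,
       {p : X' × X' | ∃ y : X', (p.1, y) ∈ Φ t ∧ (y, p.2) ∈ Φ s} = Φ (s * t))) ∧
    -- `(Φ, X, ι)` is a globalization of `G` with `X = T·ι(Y)`
    (∀ s : T, G s = {p : Y × Y | (ι p.1, ι p.2) ∈ Φ s}) ∧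
    (∀ x ∈ Xset, ∃ (t : T) (y : Y), (ι y, x) ∈ Φ t) := by
  have hY : ∀ y : Y, ι y ∈ Xset := by
    intro y
    obtain ⟨y', hy'⟩ := hα2 y
    have h : (y', y) ∈ G (inv (α y)) := by rw [hGinv]; exact hy'
    rw [hrestr] at h
    rw [hX]; exact ⟨inv (α y), y', h⟩
  have hinvar : ∀ (t : T) (x x' : X'), (x, x') ∈ Φ' t → x ∈ Xset → x' ∈ Xset := by
    intro t x x' hxx hx
    rw [hX] at hx ⊢
    obtain ⟨s, y, hy⟩ := hx
    refine ⟨t * s, y, ?_⟩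
    rw [← hΦ'comp t s]
    exact ⟨x, hy, hxx⟩
  refine ⟨hY, hinvar, ?_, ⟨?_, ?_⟩, ?_, ?_⟩
  · intro t
    ext x
    simp only [Set.mem_setOf_eq, Set.mem_inter_iff, hΦ]
    constructor
    · rintro ⟨x', hx', hX1, _⟩
      exact ⟨⟨x', hx'⟩, hX1⟩
    · rintro ⟨⟨x', hx'⟩, hX1⟩
      exact ⟨x', hx', hX1, hinvar t x x' hx' hX1⟩
  · intro t
    ext p
    simp only [hΦ, Set.mem_inter_iff, Set.mem_setOf_eq, hΦ'inv t]
    tauto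
  · intro s t
    ext p
    simp only [hΦ, Set.mem_inter_iff, Set.mem_setOf_eq]
    constructor
    · rintro ⟨y, ⟨hy1, hp1, hy⟩, hy2, _, hp2⟩
      exact ⟨by rw [← hΦ'comp s t]; exact ⟨y, hy1, hy2⟩, hp1, hp2⟩
    · rintro ⟨hst, hp1, hp2⟩
      rw [← hΦ'comp s t] at hst
      obtain ⟨y, hy1, hy2⟩ := hst
      have hyX := hinvar t p.1 y hy1 hp1
      exact ⟨y, ⟨hy1, hp1, hyX⟩, hy2, hyX, hp2⟩
  · intro s
    ext p
    rw [hrestr s]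
    simp only [Set.mem_setOf_eq, hΦ]
    exact ⟨fun h => ⟨h, hY p.1, hY p.2⟩, fun h => h.1⟩
  · intro x hx
    have hx' := hx
    rw [hX] at hx'
    obtain ⟨t, y, hy⟩ := hx'
    exact ⟨t, y, by rw [hΦ]; exact ⟨hy, hY y, hx⟩⟩
end
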